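/- arXiv:1609.03497 — 2 statements merged into one kernel-verified Lean document; each statement's English description precedes it below -/
import Mathlib

section
/- Let k ≥ 1 and ℓ ≥ 0 be integers, let β be a composition, and set n = 1 + |β| + ℓ. Let A be the set of ∘-decorated Dyck paths (D,S) of size n with α^Rise(D,S) = (1, β), peak_∘(D,S) = k, rise_∘(D,S) = ℓ, such that row 1 of D is a peak and 1 ∈ S, and let B be the set of ∘-decorated Dyck paths (D',S') of size n − 1 with α^Rise(D',S') = β, peak_∘(D',S') = k − 1, and rise_∘(D',S') = ℓ. Then there exists a bijection Φ : A → B such that for every (D,S) ∈ A, dinv_∘(D,S) = dinv_∘(Φ(D,S)) and area_∘(D,S) = area_∘(Φ(D,S)). -/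
open Finset

namespace DeltaCat

/-- `i`-th entry (0-indexed) of an area sequence, defaulting to `0`. -/
def ent (l : List ℕ) (i : ℕ) : ℕ := l.getD i 0

/-- `l` is the area sequence of a Dyck path (of size `l.length ≥ 1`): it is nonempty,
starts with `0`, and consecutive entries increase by at most one. -/
def IsDyck (l : List ℕ) : Prop :=
  l ≠ [] ∧ ent l 0 = 0 ∧ ∀ i < l.length, i + 1 < l.length → ent l (i + 1) ≤ ent l i + 1

instance (l : List ℕ) : Decidable (IsDyck l) := by unfold IsDyck; infer_instance

/-- the area of a Dyck path -/
def area (l : List ℕ) : ℕ := l.sum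

/-- the diagonal inversions of a Dyck path: pairs `(i,j)`, `i < j`, with
`a_i = a_j` or `a_i = a_j + 1` (0-indexed rows). -/
def dinvPairs (l : List ℕ) : Finset (ℕ × ℕ) :=
  (Finset.range l.length ×ˢ Finset.range l.length).filter
    (fun p => p.1 < p.2 ∧ (ent l p.1 = ent l p.2 ∨ ent l p.1 = ent l p.2 + 1))

/-- the number of diagonal inversions -/
def dinv (l : List ℕ) : ℕ := (dinvPairs l).card

/-- `b'(k) = #{j > k : a_j = a_k} + #{j < k : a_j = a_k + 1}` (0-indexed rows). -/
def bval (l : List ℕ) (k : ℕ) : ℕ :=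
  ((Finset.range l.length).filter (fun j => k < j ∧ ent l j = ent l k)).card +
  ((Finset.range l.length).filter (fun j => j < k ∧ ent l j = ent l k + 1)).card

/-- row `i` (0-indexed) is a double rise -/
def IsRise (l : List ℕ) (i : ℕ) : Prop := i + 1 < l.length ∧ ent l (i + 1) = ent l i + 1

instance (l : List ℕ) (i : ℕ) : Decidable (IsRise l i) := by unfold IsRise; infer_instance

/-- row `i` (0-indexed) is a peak -/
def IsPeak (l : List ℕ) (i : ℕ) : Prop := i < l.length ∧ ¬ IsRise l i

instance (l : List ℕ) (i : ℕ) : Decidable (IsPeak l i) := by unfold IsPeak; infer_instance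

/-- `Rise_∘(D,S)`: the decorated rows which are double rises -/
def riseSet (l : List ℕ) (S : Finset ℕ) : Finset ℕ := S.filter (fun i => IsRise l i)

/-- `Peak_∘(D,S)`: the decorated rows which are peaks -/
def peakSet (l : List ℕ) (S : Finset ℕ) : Finset ℕ := S.filter (fun i => IsPeak l i)

/-- `area_∘(D,S)` -/
def areaC (l : List ℕ) (S : Finset ℕ) : ℕ := area l - ∑ i ∈ riseSet l S, ent l (i + 1)

/-- `dinv_∘(D,S)` -/
def dinvC (l : List ℕ) (S : Finset ℕ) : ℕ := dinv l - ∑ i ∈ peakSet l S, bval l i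

/-- the largest row index (0-indexed) attaining the maximal area value -/
def lastMaxRow (l : List ℕ) : ℕ :=
  ((Finset.range l.length).filter
    (fun i => ∀ j ∈ Finset.range l.length, ent l j ≤ ent l i)).sup id

/-- `S` is a valid set of ∘-decorations on the rows of `l` : a set of rows not containing
the largest index attaining the maximal area value. -/
def ValidDec (l : List ℕ) (S : Finset ℕ) : Prop :=
  (∀ i ∈ S, i < l.length) ∧ lastMaxRow l ∉ S

instance (l : List ℕ) (S : Finset ℕ) : Decidable (ValidDec l S) := by
  unfold ValidDec; infer_instance

/-- the (0-indexed) rows where the path touches the diagonal, i.e. the starts of segments -/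
def segStarts (l : List ℕ) : List ℕ :=
  (List.range l.length).filter (fun i => ent l i == 0)

/-- the touch composition of a Dyck path: the list of lengths of the maximal segments -/
def touchComp (l : List ℕ) : List ℕ :=
  List.zipWith (fun cur next => next - cur) (segStarts l) ((segStarts l).drop 1 ++ [l.length])

/-- the rise-touch composition `α^Rise(D,S)`: the touch composition with the number of
decorated double rises in each segment subtracted from the corresponding part. -/
def riseTouch (l : List ℕ) (S : Finset ℕ) : List ℕ :=
  List.zipWith
    (fun cur next => (next - cur) - ((riseSet l S).filter (fun i => cur ≤ i ∧ i < next)).card)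
    (segStarts l) ((segStarts l).drop 1 ++ [l.length])

/-- all lists of length `n` with entries at most `n`; this contains every Dyck path
area sequence of size `n`. -/
def allSeqs (n : ℕ) : Finset (List ℕ) :=
  (Finset.univ : Finset (Fin n → Fin (n + 1))).image fun v => (List.ofFn v).map Fin.val

/-- the Finset of all Dyck paths of size `n` (encoded by their area sequences) -/
def dyckPaths (n : ℕ) : Finset (List ℕ) := (allSeqs n).filter IsDyck

/-- the Finset of all ∘-decorated Dyck paths of size `n` -/
def decPaths (n : ℕ) : Finset (List ℕ × Finset ℕ) :=
  ((allSeqs n) ×ˢ (Finset.range n).powerset).filter fun p => IsDyck p.1 ∧ ValidDec p.1 p.2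

/-- `Cat^Rise_{α,k,ℓ}(q,t)`, the generating function of ∘-decorated Dyck paths of size
`|α| + ℓ` with `k` decorated peaks, `ℓ` decorated double rises and rise-touch composition
`α`, by the statistics `dinv_∘` and `area_∘`; it is `0` when `k < 0` or `ℓ < 0`. -/
def CatRise {R : Type*} [CommRing R] (q t : R) (α : List ℕ) (k ℓ : ℤ) : R :=
  if 0 ≤ k ∧ 0 ≤ ℓ then
    ∑ p ∈ (decPaths (α.sum + ℓ.toNat)).filter
        (fun p => (peakSet p.1 p.2).card = k.toNat ∧ (riseSet p.1 p.2).card = ℓ.toNat ∧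
          riseTouch p.1 p.2 = α),
      q ^ dinvC p.1 p.2 * t ^ areaC p.1 p.2
  else 0

end DeltaCat

open DeltaCat

namespace Removal
open DeltaCat

lemma ent_cons_succ (a : ℕ) (t : List ℕ) (i : ℕ) : ent (a :: t) (i + 1) = ent t i := rfl
lemma ent_cons_zero (a : ℕ) (t : List ℕ) : ent (a :: t) 0 = a := rfl
lemma ent_nil (i : ℕ) : ent [] i = 0 := by cases i <;> rfl
lemma ent_eq_zero_of_le {l : List ℕ} {i : ℕ} (h : l.length ≤ i) : ent l i = 0 :=
  List.getD_eq_default _ _ h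

lemma ent_le {t : List ℕ} (ht : IsDyck t) : ∀ i, ent t i ≤ i := by
  intro i
  induction i with
  | zero => exact le_of_eq ht.2.1
  | succ i ih =>
    by_cases h : i + 1 < t.length
    · exact le_trans (ht.2.2 i (by omega) h) (by omega)
    · rw [ent_eq_zero_of_le (by omega)]; omega

lemma isDyck_cons {t : List ℕ} (ht : IsDyck t) : IsDyck (0 :: t) := by
  refine ⟨by simp, rfl, ?_⟩
  intro i _ h2
  cases i with
  | zero => simp [ent_cons_succ, ent_cons_zero, ht.2.1]
  | succ i => rw [ent_cons_succ, ent_cons_succ]; exact ht.2.2 i (by simp at h2 ⊢; omega) (by simpa using h2)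

lemma isDyck_tail {t : List ℕ} (h : IsDyck (0 :: t)) (h0 : ent t 0 = 0) (hne : t ≠ []) :
    IsDyck t := by
  refine ⟨hne, h0, ?_⟩
  intro i h1 h2
  have := h.2.2 (i + 1) (by simp; omega) (by simp; omega)
  simpa [ent_cons_succ] using this

lemma not_isRise_cons_zero {t : List ℕ} (h0 : ent t 0 = 0) : ¬ IsRise (0 :: t) 0 := by
  rintro ⟨-, h2⟩
  rw [ent_cons_succ, h0, ent_cons_zero] at h2
  omega

lemma isRise_cons_succ {t : List ℕ} (i : ℕ) : IsRise (0 :: t) (i + 1) ↔ IsRise t i := by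
  unfold IsRise
  rw [ent_cons_succ, ent_cons_succ]
  simp only [List.length_cons]
  omega

lemma isPeak_cons_zero {t : List ℕ} (h0 : ent t 0 = 0) : IsPeak (0 :: t) 0 :=
  ⟨by simp, not_isRise_cons_zero h0⟩

lemma isPeak_cons_succ {t : List ℕ} (i : ℕ) : IsPeak (0 :: t) (i + 1) ↔ IsPeak t i := by
  unfold IsPeak
  rw [isRise_cons_succ]
  simp

/-- generic shift helper for filters of `insert 0 (image succ)` -/
lemma filter_insert_image (P : ℕ → Prop) [DecidablePred P] (h0 : ¬ P 0) (s : Finset ℕ) :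
    (insert 0 (s.image (· + 1))).filter P = (s.filter (fun i => P (i + 1))).image (· + 1) := by
  ext a
  simp only [Finset.mem_filter, Finset.mem_insert, Finset.mem_image]
  constructor
  · rintro ⟨(rfl | ⟨b, hb, rfl⟩), hP⟩
    · exact absurd hP h0
    · exact ⟨b, ⟨hb, hP⟩, rfl⟩
  · rintro ⟨b, ⟨hb, hP⟩, rfl⟩
    exact ⟨Or.inr ⟨b, hb, rfl⟩, hP⟩

lemma filter_image_succ (P : ℕ → Prop) [DecidablePred P] (s : Finset ℕ) :
    (s.image (· + 1)).filter P = (s.filter (fun i => P (i + 1))).image (· + 1) := by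
  ext a
  simp only [Finset.mem_filter, Finset.mem_image]
  constructor
  · rintro ⟨⟨b, hb, rfl⟩, hP⟩
    exact ⟨b, ⟨hb, hP⟩, rfl⟩
  · rintro ⟨b, ⟨hb, hP⟩, rfl⟩
    exact ⟨⟨b, hb, rfl⟩, hP⟩

lemma filter_range_succ (P : ℕ → Prop) [DecidablePred P] (h0 : ¬ P 0) (N : ℕ) :
    (range (N + 1)).filter P = ((range N).filter (fun i => P (i + 1))).image (· + 1) := by
  ext a
  simp only [Finset.mem_filter, Finset.mem_range, Finset.mem_image]
  constructor
  · rintro ⟨ha, hP⟩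
    cases a with
    | zero => exact absurd hP h0
    | succ b => exact ⟨b, ⟨by omega, hP⟩, rfl⟩
  · rintro ⟨b, ⟨hb, hP⟩, rfl⟩
    exact ⟨by simpa using hb, hP⟩

lemma succ_injective' : Function.Injective (· + 1 : ℕ → ℕ) := fun a b h => by simpa using h

lemma riseSet_cons {t : List ℕ} (h0 : ent t 0 = 0) (S' : Finset ℕ) :
    riseSet (0 :: t) (insert 0 (S'.image (· + 1))) = (riseSet t S').image (· + 1) := by
  unfold riseSet
  rw [filter_insert_image _ (by simpa [decide_eq_true_eq] using not_isRise_cons_zero h0)]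
  congr 1
  exact Finset.filter_congr fun i _ => by simp [isRise_cons_succ]

lemma peakSet_cons {t : List ℕ} (h0 : ent t 0 = 0) (S' : Finset ℕ) :
    peakSet (0 :: t) (insert 0 (S'.image (· + 1))) =
      insert 0 ((peakSet t S').image (· + 1)) := by
  unfold peakSet
  rw [Finset.filter_insert, if_pos (isPeak_cons_zero h0), filter_image_succ]
  congr 2
  exact Finset.filter_congr fun i _ => by rw [isPeak_cons_succ]

end Removal

namespace Removal
open DeltaCat

variable {t : List ℕ} {S' : Finset ℕ}

/-- number of touches of `t` -/
def Z (t : List ℕ) : ℕ := ((range t.length).filter (fun j => ent t j = 0)).card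

lemma areaC_cons (h0 : ent t 0 = 0) (S' : Finset ℕ) :
    areaC (0 :: t) (insert 0 (S'.image (· + 1))) = areaC t S' := by
  unfold areaC area
  rw [riseSet_cons h0, Finset.sum_image (fun a _ b _ h => by simpa using h)]
  simp [ent_cons_succ]

lemma dinvPairs_cons (h0 : ent t 0 = 0) :
    dinvPairs (0 :: t) =
      ((range t.length).filter (fun j => ent t j = 0)).image (fun j => (0, j + 1)) ∪
      (dinvPairs t).image (fun p => (p.1 + 1, p.2 + 1)) := by
  ext ⟨a, b⟩
  simp only [dinvPairs, Finset.mem_filter, Finset.mem_product, Finset.mem_range,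
    Finset.mem_union, Finset.mem_image, List.length_cons, Prod.mk.injEq, Prod.exists]
  constructor
  · rintro ⟨⟨ha, hb⟩, hab, hent⟩
    cases a with
    | zero =>
      left
      obtain ⟨c, rfl⟩ : ∃ c, b = c + 1 := ⟨b - 1, by omega⟩
      rw [ent_cons_zero, ent_cons_succ] at hent
      exact ⟨c, ⟨by omega, by omega⟩, rfl, rfl⟩
    | succ a =>
      right
      obtain ⟨c, rfl⟩ : ∃ c, b = c + 1 := ⟨b - 1, by omega⟩
      rw [ent_cons_succ, ent_cons_succ] at hent
      exact ⟨a, c, ⟨⟨by omega, by omega⟩, by omega, hent⟩, rfl, rfl⟩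
  · rintro (⟨c, ⟨hc, hent⟩, rfl, rfl⟩ | ⟨x, y, ⟨⟨hx, hy⟩, hxy, hent⟩, rfl, rfl⟩)
    · exact ⟨⟨by omega, by omega⟩, by omega, Or.inl (by rw [ent_cons_zero, ent_cons_succ, hent])⟩
    · exact ⟨⟨by omega, by omega⟩, by omega, by rw [ent_cons_succ, ent_cons_succ]; exact hent⟩

lemma dinv_cons (h0 : ent t 0 = 0) : dinv (0 :: t) = dinv t + Z t := by
  unfold dinv Z
  rw [dinvPairs_cons h0, Finset.card_union_of_disjoint, Finset.card_image_of_injective _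
    (fun p q h => by simpa [Prod.ext_iff] using h),
    Finset.card_image_of_injective _ (fun p q h => by
      simp only [Prod.ext_iff] at h ⊢
      omega), add_comm]
  · rw [Finset.disjoint_left]
    rintro ⟨a, b⟩ h1 h2
    simp only [Finset.mem_image, Prod.mk.injEq, Prod.exists] at h1 h2
    obtain ⟨c, _, rfl, rfl⟩ := h1
    obtain ⟨x, y, _, hx, _⟩ := h2
    omega

lemma bval_cons_zero (h0 : ent t 0 = 0) : bval (0 :: t) 0 = Z t := by
  unfold bval Z
  have h1 : ((range (0 :: t).length).filter
      (fun j => 0 < j ∧ ent (0 :: t) j = ent (0 :: t) 0)).card =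
      ((range t.length).filter (fun j => ent t j = 0)).card := by
    rw [List.length_cons, filter_range_succ _ (by simp)]
    rw [Finset.card_image_of_injective _ (fun a b h => by simpa using h)]
    congr 1
    refine Finset.filter_congr fun i _ => ?_
    rw [ent_cons_succ, ent_cons_zero]
    simp
  have h2 : ((range (0 :: t).length).filter
      (fun j => j < 0 ∧ ent (0 :: t) j = ent (0 :: t) 0 + 1)) = ∅ := by
    refine Finset.filter_false_of_mem fun i _ => by omega
  rw [h1, h2]
  simp

lemma bval_cons_succ (h0 : ent t 0 = 0) (i : ℕ) : bval (0 :: t) (i + 1) = bval t i := by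
  unfold bval
  congr 1
  · rw [List.length_cons, filter_range_succ _ (by simp),
      Finset.card_image_of_injective _ (fun a b h => by simpa using h)]
    congr 1
    refine Finset.filter_congr fun j _ => ?_
    rw [ent_cons_succ, ent_cons_succ]
    omega
  · rw [List.length_cons, filter_range_succ _ (by
      rw [ent_cons_zero, ent_cons_succ]
      omega),
      Finset.card_image_of_injective _ (fun a b h => by simpa using h)]
    congr 1
    refine Finset.filter_congr fun j _ => ?_
    rw [ent_cons_succ, ent_cons_succ]
    omega

lemma dinvC_cons (h0 : ent t 0 = 0) (S' : Finset ℕ) :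
    dinvC (0 :: t) (insert 0 (S'.image (· + 1))) = dinvC t S' := by
  unfold dinvC
  rw [dinv_cons h0, peakSet_cons h0, Finset.sum_insert (by simp),
    Finset.sum_image (fun a _ b _ h => by simpa using h), bval_cons_zero h0]
  have : ∀ x ∈ peakSet t S', bval (0 :: t) (x + 1) = bval t x := fun x _ => bval_cons_succ h0 x
  rw [Finset.sum_congr rfl this, add_comm (dinv t) (Z t), Nat.add_sub_add_left]

end Removal

namespace Removal
open DeltaCat

variable {t : List ℕ} {S' : Finset ℕ}

lemma sup_succ (s : Finset ℕ) (hs : s.Nonempty) : s.sup (· + 1) = s.sup id + 1 := by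
  refine le_antisymm (Finset.sup_le fun i hi => Nat.succ_le_succ (Finset.le_sup (f := id) hi)) ?_
  obtain ⟨i, hi, he⟩ := Finset.exists_mem_eq_sup s hs id
  rw [he]
  exact Finset.le_sup (f := (· + 1)) hi

lemma maxFilter_nonempty (hne : t ≠ []) :
    ((range t.length).filter
      (fun i => ∀ j ∈ range t.length, ent t j ≤ ent t i)).Nonempty := by
  obtain ⟨b, hb, hmax⟩ := Finset.exists_max_image (range t.length) (ent t)
    ⟨0, by simp; exact List.length_pos_iff.2 hne⟩
  exact ⟨b, Finset.mem_filter.2 ⟨hb, hmax⟩⟩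

lemma lastMaxRow_cons (ht : IsDyck t) : lastMaxRow (0 :: t) = lastMaxRow t + 1 := by
  have hne : t ≠ [] := ht.1
  have hftne := maxFilter_nonempty hne
  have hmem : ∀ i, ((i + 1 < (0 :: t).length ∧
        ∀ j ∈ range (0 :: t).length, ent (0 :: t) j ≤ ent (0 :: t) (i + 1))) ↔
      (i < t.length ∧ ∀ j ∈ range t.length, ent t j ≤ ent t i) := by
    intro i
    simp only [List.length_cons]
    constructor
    · rintro ⟨h1, h2⟩
      refine ⟨by omega, fun j hj => ?_⟩
      have := h2 (j + 1) (by simp only [Finset.mem_range] at hj ⊢; omega)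
      simpa [ent_cons_succ] using this
    · rintro ⟨h1, h2⟩
      refine ⟨by omega, fun j hj => ?_⟩
      simp only [Finset.mem_range] at hj
      cases j with
      | zero => rw [ent_cons_zero, ent_cons_succ]; omega
      | succ j =>
        rw [ent_cons_succ, ent_cons_succ]
        exact h2 j (Finset.mem_range.2 (by omega))
  have hmax : lastMaxRow t < t.length ∧
      ∀ j ∈ range t.length, ent t j ≤ ent t (lastMaxRow t) := by
    obtain ⟨i, hi, he⟩ := Finset.exists_mem_eq_sup _ hftne id
    have : lastMaxRow t = i := he
    rw [this]
    simpa using Finset.mem_filter.1 hi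
  have hdef : ((range t.length).filter
      (fun i => ∀ j ∈ range t.length, ent t j ≤ ent t i)).sup id = lastMaxRow t := rfl
  unfold lastMaxRow
  rw [hdef]
  refine le_antisymm (Finset.sup_le ?_) ?_
  · intro a ha
    rw [Finset.mem_filter, Finset.mem_range] at ha
    cases a with
    | zero => simp only [id_eq]; omega
    | succ b =>
      have hb : b < t.length ∧ ∀ j ∈ range t.length, ent t j ≤ ent t b :=
        (hmem b).1 ⟨by simpa using ha.1, ha.2⟩
      have : b ≤ lastMaxRow t :=
        Finset.le_sup (f := id) (Finset.mem_filter.2 ⟨Finset.mem_range.2 hb.1, hb.2⟩)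
      simp only [id_eq]
      omega
  · refine Finset.le_sup (f := id) (Finset.mem_filter.2 ⟨?_, ?_⟩)
    · rw [Finset.mem_range]
      have := ((hmem (lastMaxRow t)).2 hmax).1
      exact this
    · exact ((hmem (lastMaxRow t)).2 hmax).2

lemma validDec_cons (ht : IsDyck t) (hS : ValidDec t S') :
    ValidDec (0 :: t) (insert 0 (S'.image (· + 1))) := by
  constructor
  · intro i hi
    rcases Finset.mem_insert.1 hi with rfl | hi
    · simp
    · obtain ⟨b, hb, rfl⟩ := Finset.mem_image.1 hi
      have := hS.1 b hb
      simp only [List.length_cons]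
      omega
  · rw [lastMaxRow_cons ht]
    intro h
    rcases Finset.mem_insert.1 h with h | h
    · omega
    · obtain ⟨b, hb, he⟩ := Finset.mem_image.1 h
      have : b = lastMaxRow t := by omega
      exact hS.2 (this ▸ hb)

lemma validDec_tail (ht : IsDyck t)
    (hS : ValidDec (0 :: t) (insert 0 (S'.image (· + 1)))) : ValidDec t S' := by
  constructor
  · intro i hi
    have := hS.1 (i + 1) (Finset.mem_insert_of_mem (Finset.mem_image.2 ⟨i, hi, rfl⟩))
    simp only [List.length_cons] at this
    omega
  · intro h
    exact hS.2 (by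
      rw [lastMaxRow_cons ht]
      exact Finset.mem_insert_of_mem (Finset.mem_image.2 ⟨_, h, rfl⟩))

end Removal

namespace Removal
open DeltaCat

variable {t : List ℕ} {S' : Finset ℕ}

lemma segStarts_head (h0 : ent t 0 = 0) (hne : t ≠ []) :
    ∃ r, segStarts t = 0 :: r := by
  unfold segStarts
  obtain ⟨M, hM⟩ : ∃ M, t.length = M + 1 :=
    ⟨t.length - 1, by have := List.length_pos_iff.2 hne; omega⟩
  rw [hM, List.range_succ_eq_map, List.filter_cons]
  simp only [h0, beq_self_eq_true, if_pos]
  exact ⟨_, rfl⟩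

lemma segStarts_cons (h0 : ent t 0 = 0) :
    segStarts (0 :: t) = 0 :: (segStarts t).map (· + 1) := by
  unfold segStarts
  rw [List.length_cons, List.range_succ_eq_map, List.filter_cons]
  simp only [ent_cons_zero, beq_self_eq_true, if_pos]
  congr 1
  have hfe : Nat.succ = (· + 1 : ℕ → ℕ) := funext fun _ => rfl
  rw [hfe, List.filter_map]
  have he : ((fun i => ent (0 :: t) i == 0) ∘ (· + 1)) = (fun i => ent t i == 0) := by
    funext i
    simp only [Function.comp_apply, ent_cons_succ]
  rw [he]

lemma card_filter_shift (R : Finset ℕ) (a b : ℕ) :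
    ((R.image (· + 1)).filter (fun i => a + 1 ≤ i ∧ i < b + 1)).card
      = (R.filter (fun i => a ≤ i ∧ i < b)).card := by
  rw [filter_image_succ, Finset.card_image_of_injective _ succ_injective']
  congr 1
  exact Finset.filter_congr fun i _ => by omega

lemma riseTouch_cons (h0 : ent t 0 = 0) (hne : t ≠ []) (S' : Finset ℕ) :
    riseTouch (0 :: t) (insert 0 (S'.image (· + 1))) = 1 :: riseTouch t S' := by
  obtain ⟨r, hr⟩ := segStarts_head h0 hne
  unfold riseTouch
  rw [segStarts_cons h0, hr, riseSet_cons h0]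
  simp only [List.map_cons, List.drop_succ_cons, List.drop_zero, List.cons_append, List.zipWith_cons_cons,
    List.length_cons]
  congr 1
  · have hemp : ((riseSet t S').image (· + 1)).filter (fun i => 0 ≤ i ∧ i < 0 + 1) = ∅ := by
      refine Finset.filter_false_of_mem fun i hi => ?_
      obtain ⟨b, _, rfl⟩ := Finset.mem_image.1 hi
      omega
    rw [hemp]
    simp
  · have e1 : (((0 + 1) :: (r.map (· + 1))) : List ℕ) = (0 :: r).map (· + 1) := by
      simp
    have e2 : r.map (· + 1) ++ [t.length + 1] = (r ++ [t.length]).map (· + 1) := by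
      simp
    rw [e1, e2, List.zipWith_map]
    congr 1
    funext a b
    rw [card_filter_shift]
    omega

lemma card_peakSet_cons (h0 : ent t 0 = 0) (S' : Finset ℕ) :
    (peakSet (0 :: t) (insert 0 (S'.image (· + 1)))).card = (peakSet t S').card + 1 := by
  rw [peakSet_cons h0, Finset.card_insert_of_notMem (by simp),
    Finset.card_image_of_injective _ succ_injective']

lemma card_riseSet_cons (h0 : ent t 0 = 0) (S' : Finset ℕ) :
    (riseSet (0 :: t) (insert 0 (S'.image (· + 1)))).card = (riseSet t S').card := by
  rw [riseSet_cons h0, Finset.card_image_of_injective _ succ_injective']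

lemma mem_allSeqs {m : ℕ} {l : List ℕ} :
    l ∈ allSeqs m ↔ l.length = m ∧ ∀ x ∈ l, x ≤ m := by
  unfold allSeqs
  rw [Finset.mem_image]
  constructor
  · rintro ⟨v, -, rfl⟩
    refine ⟨by simp, ?_⟩
    intro x hx
    simp only [List.mem_map] at hx
    obtain ⟨y, hy, rfl⟩ := hx
    exact Nat.lt_succ_iff.1 y.isLt
  · rintro ⟨hlen, hle⟩
    refine ⟨fun i => ⟨l[(i : ℕ)]'(by omega), ?_⟩, Finset.mem_univ _, ?_⟩
    · exact Nat.lt_succ_of_le (hle _ (List.getElem_mem _))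
    · apply List.ext_getElem
      · simp [hlen]
      · intro i h1 h2
        simp

lemma mem_decPaths {n : ℕ} {p : List ℕ × Finset ℕ} :
    p ∈ decPaths n ↔ p.1 ∈ allSeqs n ∧ p.2 ⊆ range n ∧ IsDyck p.1 ∧ ValidDec p.1 p.2 := by
  unfold decPaths
  rw [Finset.mem_filter, Finset.mem_product, Finset.mem_powerset, and_assoc]

lemma ent_eq_getElem {l : List ℕ} {i : ℕ} (h : i < l.length) : ent l i = l[i] :=
  List.getD_eq_getElem l 0 h

lemma entries_lt {t : List ℕ} (ht : IsDyck t) : ∀ x ∈ t, x < t.length := by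
  intro x hx
  obtain ⟨i, hi, rfl⟩ := List.mem_iff_getElem.1 hx
  rw [← ent_eq_getElem hi]
  exact lt_of_le_of_lt (ent_le ht i) hi

lemma mem_decPaths_cons {m : ℕ} {t : List ℕ} {S' : Finset ℕ}
    (h : (t, S') ∈ decPaths m) :
    ((0 :: t : List ℕ), insert 0 (S'.image (· + 1))) ∈ decPaths (m + 1) := by
  obtain ⟨hseq, hsub, ht, hv⟩ := mem_decPaths.1 h
  obtain ⟨hlen, hle⟩ := mem_allSeqs.1 hseq
  refine mem_decPaths.2 ⟨mem_allSeqs.2 ⟨by simpa using hlen, ?_⟩, ?_, isDyck_cons ht,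
    validDec_cons ht hv⟩
  · intro x hx
    rcases List.mem_cons.1 hx with rfl | hx
    · omega
    · have := hle x hx; omega
  · intro a ha
    rcases Finset.mem_insert.1 ha with rfl | ha
    · simp
    · obtain ⟨b, hb, rfl⟩ := Finset.mem_image.1 ha
      have := Finset.mem_range.1 (hsub hb)
      simp only [Finset.mem_range]
      omega

lemma image_pred_succ (X : Finset ℕ) (hX : 0 ∉ X) : (X.image (· - 1)).image (· + 1) = X := by
  rw [Finset.image_image]
  have he : ∀ x ∈ X, (x - 1 + 1) = x := by
    intro x hx
    have : x ≠ 0 := fun h => hX (h ▸ hx)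
    omega
  calc X.image ((· + 1) ∘ (· - 1)) = X.image id :=
        Finset.image_congr (fun x hx => he x (by simpa using hx))
    _ = X := Finset.image_id

lemma image_succ_pred (X : Finset ℕ) : (X.image (· + 1)).image (· - 1) = X := by
  rw [Finset.image_image]
  calc X.image ((· - 1) ∘ (· + 1)) = X.image id :=
        Finset.image_congr (fun x _ => by simp)
    _ = X := Finset.image_id

lemma lastMaxRow_len1 {l : List ℕ} (h : l.length = 1) : lastMaxRow l = 0 := by
  unfold lastMaxRow
  refine Nat.le_antisymm (Finset.sup_le fun i hi => ?_) (Nat.zero_le _)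
  have := Finset.mem_range.1 (Finset.mem_filter.1 hi).1
  simp only [id_eq]
  omega

lemma structure_A {n : ℕ} (hn2 : 2 ≤ n) {p : List ℕ × Finset ℕ}
    (h1 : p ∈ decPaths n) (hpk : IsPeak p.1 0) (h0S : 0 ∈ p.2) :
    ∃ t S', IsDyck t ∧ ent t 0 = 0 ∧ t ≠ [] ∧ (t, S') ∈ decPaths (n - 1) ∧
      p = ((0 :: t : List ℕ), insert 0 (S'.image (· + 1))) ∧
      (p.1.tail, (p.2.erase 0).image (· - 1)) = (t, S') := by
  obtain ⟨hseq, hsub, hd, hv⟩ := mem_decPaths.1 h1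
  obtain ⟨hlen, hle⟩ := mem_allSeqs.1 hseq
  obtain ⟨a, t, hpt⟩ : ∃ a t, p.1 = a :: t := by
    cases hp : p.1 with
    | nil => exact absurd hp hd.1
    | cons a t => exact ⟨a, t, rfl⟩
  have ha : a = 0 := by
    have := hd.2.1
    rw [hpt] at this
    exact this
  subst ha
  have hlt : t.length = n - 1 := by
    rw [hpt] at hlen
    simp only [List.length_cons] at hlen
    omega
  have hne : t ≠ [] := by
    intro h
    rw [h] at hlt
    simp at hlt
    omega
  have h0 : ent t 0 = 0 := by
    have h1lt : 1 < p.1.length := by omega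
    have hle1 : ent p.1 1 ≤ 1 := by
      have := hd.2.2 0 (by omega) (by omega)
      rw [hd.2.1] at this
      simpa using this
    have hne1 : ent p.1 1 ≠ 1 := fun h => hpk.2 ⟨h1lt, by rw [h, hd.2.1]⟩
    have he0 : ent p.1 1 = 0 := by omega
    rw [hpt] at he0
    exact he0
  have hdt : IsDyck t := isDyck_tail (hpt ▸ hd) h0 hne
  set S' := (p.2.erase 0).image (· - 1) with hS'
  have h0e : 0 ∉ p.2.erase 0 := Finset.notMem_erase _ _
  have hSrec : insert 0 (S'.image (· + 1)) = p.2 := by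
    rw [hS', image_pred_succ _ h0e, Finset.insert_erase h0S]
  refine ⟨t, S', hdt, h0, hne, ?_, ?_, ?_⟩
  · refine mem_decPaths.2 ⟨mem_allSeqs.2 ⟨hlt, ?_⟩, ?_, hdt, ?_⟩
    · intro x hx
      have := entries_lt hdt x hx
      omega
    · intro a ha
      obtain ⟨b, hb, rfl⟩ := Finset.mem_image.1 ha
      have hbne : b ≠ 0 := fun h => h0e (h ▸ hb)
      have : b < n := Finset.mem_range.1 (hsub (Finset.mem_of_mem_erase hb))
      simp only [Finset.mem_range]
      omega
    · apply validDec_tail hdt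
      rw [hSrec, ← hpt]
      exact hv
  · rw [hSrec, ← hpt]
  · rw [hpt]
    rfl

end Removal

open Removal

/-- Case 2 of Proposition 3.2: removing the first (decorated) peak row is a bijection
between ∘-decorated Dyck paths of size `n = 1 + |β| + ℓ` with rise-touch composition
`(1, β)`, `k` decorated peaks, `ℓ` decorated double rises, whose first row is a
decorated peak, and ∘-decorated Dyck paths of size `n - 1` with rise-touch composition
`β`, `k - 1` decorated peaks and `ℓ` decorated double rises; it preserves both `dinv_∘`
and `area_∘`. -/
theorem removal_bijection_decorated_first_peak
    (k ℓ n : ℕ) (hk : 1 ≤ k) (β : List ℕ) (hβ : ∀ x ∈ β, 0 < x)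
    (hn : n = 1 + β.sum + ℓ) :
    ∃ Φ : {p : List ℕ × Finset ℕ // p ∈ decPaths n ∧
            riseTouch p.1 p.2 = 1 :: β ∧ (peakSet p.1 p.2).card = k ∧
            (riseSet p.1 p.2).card = ℓ ∧ IsPeak p.1 0 ∧ 0 ∈ p.2} →
          {p : List ℕ × Finset ℕ // p ∈ decPaths (n - 1) ∧
            riseTouch p.1 p.2 = β ∧ (peakSet p.1 p.2).card = k - 1 ∧
            (riseSet p.1 p.2).card = ℓ},
      Function.Bijective Φ ∧
        ∀ p, dinvC p.1.1 p.1.2 = dinvC (Φ p).1.1 (Φ p).1.2 ∧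
             areaC p.1.1 p.1.2 = areaC (Φ p).1.1 (Φ p).1.2 := by
  by_cases h2 : 2 ≤ n
  · have hn1 : n - 1 + 1 = n := by omega
    refine ⟨fun p => ⟨(p.1.1.tail, (p.1.2.erase 0).image (· - 1)), ?_⟩,
      Function.bijective_iff_has_inverse.mpr
        ⟨fun q => ⟨((0 :: q.1.1 : List ℕ), insert 0 (q.1.2.image (· + 1))), ?_⟩, ?_, ?_⟩, ?_⟩
    · -- Φ lands in B
      obtain ⟨hp1, hrt, hpk, hrs, hpk0, h0S⟩ := p.2
      obtain ⟨t, S', hdt, h0, hne, hmem, hpeq, hphi⟩ := structure_A h2 hp1 hpk0 h0S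
      have e1 : p.1.1 = 0 :: t := congrArg Prod.fst hpeq
      have e2 : p.1.2 = insert 0 (S'.image (· + 1)) := congrArg Prod.snd hpeq
      have hrt2 : (1 :: riseTouch t S' : List ℕ) = 1 :: β := by
        rw [← riseTouch_cons h0 hne S', ← e1, ← e2]
        exact hrt
      have hrt3 : riseTouch t S' = β := by injection hrt2
      rw [e1, e2, card_peakSet_cons h0] at hpk
      rw [e1, e2, card_riseSet_cons h0] at hrs
      have hpk3 : (peakSet t S').card = k - 1 := by omega
      rw [hphi]
      exact ⟨hmem, hrt3, hpk3, hrs⟩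
    · -- Ψ lands in A
      obtain ⟨hq1, hrt, hpk, hrs⟩ := q.2
      obtain ⟨hseq, hsub, hdt, hv⟩ := mem_decPaths.1 hq1
      have h0 : ent q.1.1 0 = 0 := hdt.2.1
      have hne : q.1.1 ≠ [] := hdt.1
      refine ⟨?_, ?_, ?_, ?_, ?_, ?_⟩
      · have := mem_decPaths_cons hq1
        rwa [hn1] at this
      · rw [riseTouch_cons h0 hne, hrt]
      · rw [card_peakSet_cons h0, hpk]
        omega
      · rw [card_riseSet_cons h0, hrs]
      · exact isPeak_cons_zero h0
      · exact Finset.mem_insert_self 0 _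
    · -- left inverse
      intro p
      apply Subtype.ext
      obtain ⟨hp1, hrt, hpk, hrs, hpk0, h0S⟩ := p.2
      obtain ⟨t, S', hdt, h0, hne, hmem, hpeq, hphi⟩ := structure_A h2 hp1 hpk0 h0S
      have e3 : p.1.1.tail = t := congrArg Prod.fst hphi
      have e4 : (p.1.2.erase 0).image (· - 1) = S' := congrArg Prod.snd hphi
      show ((0 :: p.1.1.tail : List ℕ),
        insert 0 (((p.1.2.erase 0).image (· - 1)).image (· + 1))) = p.1
      rw [e3, e4, hpeq]
    · -- right inverse
      intro q
      apply Subtype.ext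
      show (((0 :: q.1.1 : List ℕ)).tail,
        ((insert 0 (q.1.2.image (· + 1))).erase 0).image (· - 1)) = q.1
      rw [Finset.erase_insert (by simp), image_succ_pred]
      rfl
    · -- statistics
      intro p
      obtain ⟨hp1, hrt, hpk, hrs, hpk0, h0S⟩ := p.2
      obtain ⟨t, S', hdt, h0, hne, hmem, hpeq, hphi⟩ := structure_A h2 hp1 hpk0 h0S
      have e1 : p.1.1 = 0 :: t := congrArg Prod.fst hpeq
      have e2 : p.1.2 = insert 0 (S'.image (· + 1)) := congrArg Prod.snd hpeq
      have e3 : p.1.1.tail = t := congrArg Prod.fst hphi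
      have e4 : (p.1.2.erase 0).image (· - 1) = S' := congrArg Prod.snd hphi
      constructor
      · show dinvC p.1.1 p.1.2 = dinvC p.1.1.tail ((p.1.2.erase 0).image (· - 1))
        rw [e3, e4, e1, e2]
        exact dinvC_cons h0 S'
      · show areaC p.1.1 p.1.2 = areaC p.1.1.tail ((p.1.2.erase 0).image (· - 1))
        rw [e3, e4, e1, e2]
        exact areaC_cons h0 S'
  · -- degenerate case n = 1
    have hn1 : n = 1 := by omega
    have hA : ∀ p : {p : List ℕ × Finset ℕ // p ∈ decPaths n ∧
        riseTouch p.1 p.2 = 1 :: β ∧ (peakSet p.1 p.2).card = k ∧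
        (riseSet p.1 p.2).card = ℓ ∧ IsPeak p.1 0 ∧ 0 ∈ p.2}, False := by
      rintro ⟨p, hp1, -, -, -, -, h0S⟩
      obtain ⟨hseq, hsub, hd, hv⟩ := mem_decPaths.1 hp1
      have hlen : p.1.length = n := (mem_allSeqs.1 hseq).1
      have := lastMaxRow_len1 (l := p.1) (by omega)
      exact hv.2 (this ▸ h0S)
    have hB : ∀ q : {p : List ℕ × Finset ℕ // p ∈ decPaths (n - 1) ∧
        riseTouch p.1 p.2 = β ∧ (peakSet p.1 p.2).card = k - 1 ∧
        (riseSet p.1 p.2).card = ℓ}, False := by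
      rintro ⟨q, hq1, -, -, -⟩
      obtain ⟨hseq, hsub, hd, hv⟩ := mem_decPaths.1 hq1
      have hlen : q.1.length = n - 1 := (mem_allSeqs.1 hseq).1
      rw [hn1] at hlen
      exact hd.1 (List.length_eq_zero_iff.1 (by omega))
    exact ⟨fun p => (hA p).elim,
      ⟨fun p1 p2 _ => (hA p1).elim, fun q => (hB q).elim⟩,
      fun p => (hA p).elim⟩
end

section
/- Let k ≥ 0 and ℓ ≥ 1 be integers, let β be a composition, and set n = 1 + |β| + ℓ. Let A be the set of ∘-decorated Dyck paths (D,S) of size n with α^Rise(D,S) = (1, β), peak_∘(D,S) = k, rise_∘(D,S) = ℓ, such that row 1 of D is a double rise and 1 ∈ S, and let B be the set of ∘-decorated Dyck paths (D',S') of size n − 1 with α^Rise(D',S') = (β, 1), peak_∘(D',S') = k, and rise_∘(D',S') = ℓ − 1. Then there exists a bijection Φ : A → B such that for every (D,S) ∈ A, dinv_∘(D,S) = dinv_∘(Φ(D,S)) + ℓ(β) and area_∘(D,S) = area_∘(Φ(D,S)). -/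
/-!
A path in `A` begins with a staircase `0, 1, …, k` (`k ≥ 1`) all of whose double rises are
decorated, since its segment contributes the part `1` to `α^Rise`; the rest is a possibly empty
Dyck path `r`. Likewise a path in `B` is `r` followed by the staircase `0, 1, …, k - 1`. The
bijection moves the staircase from the front to the back, shortening it by one row.

Concatenating Dyck paths concatenates rise-touch compositions and adds `area_∘`, and a fully
decorated staircase has `area_∘ = 0` and no diagonal inversions of its own. Between the
staircase and `r`, row `i ≥ 1` of the front staircase forms inversions with the later rows of `r`
at height `i`, exactly as row `i - 1` of the back staircase does with the earlier rows of `r` at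
height `i`, and a row of `r` at height `a < k` meets exactly one staircase row in either position;
only row `0` of the front staircase is lost, and it accounted for one inversion with each return
of `r` to the diagonal, i.e. for `ℓ(β)` of them.
-/

open Finset

namespace DeltaCat

section Entries

variable {u v l : List ℕ}

lemma ent_append_left {i : ℕ} (h : i < u.length) : ent (u ++ v) i = ent u i :=
  List.getD_append _ _ _ _ h

lemma ent_append_right (u v : List ℕ) (j : ℕ) : ent (u ++ v) (u.length + j) = ent v j := by
  rw [ent, List.getD_append_right _ _ _ _ (by omega), Nat.add_sub_cancel_left]
  rfl

lemma ent_append (u v : List ℕ) (i : ℕ) :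
    ent (u ++ v) i = if i < u.length then ent u i else ent v (i - u.length) := by
  split_ifs with h
  · exact ent_append_left h
  · rw [← ent_append_right u v, Nat.add_sub_cancel' (not_lt.mp h)]

lemma ent_of_length_le {i : ℕ} (h : l.length ≤ i) : ent l i = 0 :=
  List.getD_eq_default _ _ h

lemma ent_range {m i : ℕ} (h : i < m) : ent (List.range m) i = i := by
  simp [ent, h]

lemma ent_take {t i : ℕ} (h : i < t) : ent (l.take t) i = ent l i := by
  simp [ent, h]

lemma ent_drop (t j : ℕ) : ent (l.drop t) j = ent l (t + j) := by
  simp [ent]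

lemma map_ent_range (l : List ℕ) : (List.range l.length).map (ent l) = l := by
  apply List.ext_getElem (by simp)
  intro i _ h
  simp [ent, List.getElem?_eq_getElem h]

lemma card_filter_range_eq_length (n : ℕ) (p : ℕ → Prop) [DecidablePred p] :
    ((range n).filter p).card = ((List.range n).filter (fun i => decide (p i))).length := by
  simp [Finset.card, Finset.filter_val, Finset.range_val, Multiset.range]

lemma card_filter_ent_eq (l : List ℕ) (a : ℕ) :
    ((range l.length).filter (fun j => ent l j = a)).card = l.count a := by
  conv_rhs => rw [← map_ent_range l]
  rw [List.count_eq_countP, List.countP_map, List.countP_eq_length_filter,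
    card_filter_range_eq_length]
  rfl

lemma card_filter_range_add (p : ℕ → Prop) [DecidablePred p] (a b : ℕ) :
    ((range (a + b)).filter p).card =
      ((range a).filter p).card + ((range b).filter (fun j => p (a + j))).card := by
  simp only [Finset.card_filter, Finset.sum_range_add]

lemma area_eq_sum_ent (l : List ℕ) : area l = ∑ i ∈ range l.length, ent l i := by
  conv_lhs => rw [area, ← map_ent_range l]
  simp [Finset.sum, Multiset.range]

end Entries

/-- Area sequences of Dyck paths, the empty path included (`ent [] 0 = 0` by default). -/
def IsDyckOrNil (l : List ℕ) : Prop :=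
  ent l 0 = 0 ∧ ∀ i, i + 1 < l.length → ent l (i + 1) ≤ ent l i + 1

section Dyck

variable {u v l : List ℕ}

lemma IsDyck.isDyckOrNil (h : IsDyck l) : IsDyckOrNil l :=
  ⟨h.2.1, fun i hi => h.2.2 i (by omega) hi⟩

lemma IsDyckOrNil.isDyck (h : IsDyckOrNil l) (hne : l ≠ []) : IsDyck l :=
  ⟨hne, h.1, fun i _ hi => h.2 i hi⟩

lemma IsDyckOrNil.ent_le (h : IsDyckOrNil l) (i : ℕ) : ent l i ≤ i := by
  induction i with
  | zero => simp [h.1]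
  | succ i ih =>
    rcases Nat.lt_or_ge (i + 1) l.length with hi | hi
    · have := h.2 i hi; omega
    · rw [ent_of_length_le hi]; omega

lemma isDyckOrNil_range (m : ℕ) : IsDyckOrNil (List.range m) := by
  refine ⟨?_, fun i hi => ?_⟩
  · rcases Nat.eq_zero_or_pos m with rfl | hm
    · rfl
    · exact ent_range hm
  · rw [List.length_range] at hi
    rw [ent_range hi, ent_range (by omega)]

lemma IsDyckOrNil.append (hu : IsDyckOrNil u) (hv : IsDyckOrNil v) : IsDyckOrNil (u ++ v) := by
  refine ⟨?_, fun i hi => ?_⟩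
  · rcases Nat.eq_zero_or_pos u.length with h0 | hpos
    · rw [List.length_eq_zero_iff.mp h0]; exact hv.1
    · rw [ent_append_left hpos]; exact hu.1
  rw [List.length_append] at hi
  rcases Nat.lt_or_ge (i + 1) u.length with h | h
  · rw [ent_append_left h, ent_append_left (by omega)]
    exact hu.2 i h
  rcases h.eq_or_lt with h | h
  · rw [show i + 1 = u.length + 0 by omega, ent_append_right, hv.1]
    omega
  · obtain ⟨j, rfl⟩ : ∃ j, i = u.length + j := ⟨i - u.length, by omega⟩
    rw [add_assoc, ent_append_right, ent_append_right]
    exact hv.2 j (by omega)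

lemma IsDyckOrNil.take (h : IsDyckOrNil l) (t : ℕ) : IsDyckOrNil (l.take t) := by
  refine ⟨?_, fun i hi => ?_⟩
  · rcases Nat.eq_zero_or_pos t with rfl | ht
    · rfl
    · rw [ent_take ht]; exact h.1
  · rw [List.length_take] at hi
    rw [ent_take (by omega), ent_take (by omega)]
    exact h.2 i (by omega)

lemma IsDyckOrNil.drop (h : IsDyckOrNil l) {t : ℕ} (ht : ent l t = 0) :
    IsDyckOrNil (l.drop t) := by
  refine ⟨by rw [ent_drop, add_zero, ht], fun i hi => ?_⟩
  rw [List.length_drop] at hi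
  rw [ent_drop, ent_drop, ← add_assoc]
  exact h.2 _ (by omega)

lemma mem_allSeqs {n : ℕ} : l ∈ allSeqs n ↔ l.length = n ∧ ∀ x ∈ l, x ≤ n := by
  constructor
  · intro hl
    obtain ⟨f, -, rfl⟩ := Finset.mem_image.mp hl
    simp only [List.length_map, List.length_ofFn, List.mem_map, List.mem_ofFn,
      true_and]
    rintro _ ⟨_, _, rfl⟩
    exact Nat.lt_succ_iff.mp (Fin.isLt _)
  · rintro ⟨rfl, hle⟩
    refine Finset.mem_image.mpr ⟨fun i => ⟨l[i], Nat.lt_succ_of_le (hle _ (by simp))⟩,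
      Finset.mem_univ _, ?_⟩
    simp only [List.map_ofFn]
    exact List.ofFn_getElem

lemma mem_decPaths {n : ℕ} {p : List ℕ × Finset ℕ} :
    p ∈ decPaths n ↔
      IsDyck p.1 ∧ p.2 ⊆ range p.1.length ∧ lastMaxRow p.1 ∉ p.2 ∧ p.1.length = n := by
  rw [decPaths, Finset.mem_filter, Finset.mem_product, Finset.mem_powerset, mem_allSeqs]
  simp only [ValidDec, Finset.subset_iff, Finset.mem_range]
  constructor
  · rintro ⟨⟨⟨hlen, -⟩, -⟩, hD, hS, hmax⟩
    exact ⟨hD, hS, hmax, hlen⟩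
  · rintro ⟨hD, hS, hmax, hlen⟩
    refine ⟨⟨⟨hlen, fun x hx => ?_⟩, fun i hi => hlen ▸ hS i hi⟩, hD, hS, hmax⟩
    obtain ⟨i, hi, rfl⟩ := List.getElem_of_mem hx
    have := hD.isDyckOrNil.ent_le i
    rw [ent, List.getD_eq_getElem _ _ hi] at this
    omega

end Dyck

def joinDec (u : List ℕ) (S T : Finset ℕ) : Finset ℕ := S ∪ T.map (addLeftEmbedding u.length)

section Join

variable {u v l : List ℕ} {S T : Finset ℕ}

lemma mem_joinDec_left {i : ℕ} (h : i < u.length) : i ∈ joinDec u S T ↔ i ∈ S := by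
  simp only [joinDec, Finset.mem_union, Finset.mem_map, addLeftEmbedding_apply]
  constructor
  · rintro (hi | ⟨j, -, rfl⟩)
    · exact hi
    · omega
  · exact Or.inl

lemma mem_joinDec_right (hS : S ⊆ range u.length) {j : ℕ} :
    u.length + j ∈ joinDec u S T ↔ j ∈ T := by
  simp only [joinDec, Finset.mem_union, Finset.mem_map, addLeftEmbedding_apply]
  constructor
  · rintro (hj | ⟨j', hj', hjj'⟩)
    · have := Finset.mem_range.mp (hS hj); omega
    · rwa [← Nat.add_left_cancel hjj']
  · exact fun hj => Or.inr ⟨j, hj, rfl⟩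

lemma joinDec_subset_range (hS : S ⊆ range u.length) (hT : T ⊆ range v.length) :
    joinDec u S T ⊆ range (u ++ v).length := by
  rw [List.length_append, Finset.range_add]
  exact Finset.union_subset_union hS (Finset.map_subset_map.mpr hT)

lemma disjoint_map_addLeftEmbedding (hS : S ⊆ range u.length) :
    Disjoint S (T.map (addLeftEmbedding u.length)) := by
  rw [Finset.disjoint_left]
  intro i hi hi'
  obtain ⟨j, -, rfl⟩ := Finset.mem_map.mp hi'
  have := Finset.mem_range.mp (hS hi)
  simp at this

lemma card_joinDec (hS : S ⊆ range u.length) : (joinDec u S T).card = S.card + T.card := by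
  rw [joinDec, Finset.card_union_of_disjoint (disjoint_map_addLeftEmbedding hS), Finset.card_map]

lemma filter_joinDec {p q₁ q₂ : ℕ → Prop} [DecidablePred p] [DecidablePred q₁]
    [DecidablePred q₂] (h₁ : ∀ i ∈ S, p i ↔ q₁ i) (h₂ : ∀ j ∈ T, p (u.length + j) ↔ q₂ j) :
    (joinDec u S T).filter p = joinDec u (S.filter q₁) (T.filter q₂) := by
  rw [joinDec, joinDec, Finset.filter_union, Finset.filter_map, Finset.filter_congr h₁]
  congr 2
  exact Finset.filter_congr h₂

lemma sum_joinDec {f : ℕ → ℕ} (hS : S ⊆ range u.length) :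
    ∑ i ∈ joinDec u S T, f i = ∑ i ∈ S, f i + ∑ j ∈ T, f (u.length + j) := by
  rw [joinDec, Finset.sum_union (disjoint_map_addLeftEmbedding hS), Finset.sum_map]
  rfl

lemma isRise_append_left (hv : ent v 0 = 0) {i : ℕ} (hi : i < u.length) :
    IsRise (u ++ v) i ↔ IsRise u i := by
  simp only [IsRise, List.length_append]
  rcases Nat.lt_or_ge (i + 1) u.length with h | h
  · rw [ent_append_left h, ent_append_left hi]
    exact and_congr_left fun _ => ⟨fun _ => h, fun _ => by omega⟩
  · rw [show i + 1 = u.length + 0 by omega, ent_append_right, hv]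
    omega

lemma isRise_append_right (j : ℕ) : IsRise (u ++ v) (u.length + j) ↔ IsRise v j := by
  simp only [IsRise, List.length_append, add_assoc, ent_append_right]
  omega

lemma isPeak_append_left (hv : ent v 0 = 0) {i : ℕ} (hi : i < u.length) :
    IsPeak (u ++ v) i ↔ IsPeak u i := by
  simp only [IsPeak, isRise_append_left hv hi, List.length_append]
  exact and_congr_left fun _ => ⟨fun _ => hi, fun _ => by omega⟩

lemma isPeak_append_right (j : ℕ) : IsPeak (u ++ v) (u.length + j) ↔ IsPeak v j := by
  simp only [IsPeak, isRise_append_right, List.length_append]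
  exact and_congr_left fun _ => by omega

lemma riseSet_append (hv : ent v 0 = 0) (hS : S ⊆ range u.length) :
    riseSet (u ++ v) (joinDec u S T) = joinDec u (riseSet u S) (riseSet v T) :=
  filter_joinDec (fun _ hi => isRise_append_left hv (Finset.mem_range.mp (hS hi)))
    (fun j _ => isRise_append_right j)

lemma peakSet_append (hv : ent v 0 = 0) (hS : S ⊆ range u.length) :
    peakSet (u ++ v) (joinDec u S T) = joinDec u (peakSet u S) (peakSet v T) :=
  filter_joinDec (fun _ hi => isPeak_append_left hv (Finset.mem_range.mp (hS hi)))
    (fun j _ => isPeak_append_right j)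

lemma riseSet_subset (l : List ℕ) (S : Finset ℕ) : riseSet l S ⊆ range (l.length - 1) :=
  fun _ hi => Finset.mem_range.mpr (by have := (Finset.mem_filter.mp hi).2.1; omega)

lemma riseSet_subset_range (l : List ℕ) (S : Finset ℕ) : riseSet l S ⊆ range l.length :=
  (riseSet_subset l S).trans (Finset.range_subset_range.mpr (Nat.sub_le _ _))

lemma peakSet_subset_range (l : List ℕ) (S : Finset ℕ) : peakSet l S ⊆ range l.length :=
  fun _ hi => Finset.mem_range.mpr (Finset.mem_filter.mp hi).2.1

end Join

def segEnds (l : List ℕ) : List ℕ := (segStarts l).drop 1 ++ [l.length]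

def partLen (R : Finset ℕ) (a b : ℕ) : ℕ := b - a - (R.filter (fun i => a ≤ i ∧ i < b)).card

section Segments

variable {u v l : List ℕ} {S T : Finset ℕ}

lemma riseTouch_eq_zipWith (l : List ℕ) (S : Finset ℕ) :
    riseTouch l S = List.zipWith (partLen (riseSet l S)) (segStarts l) (segEnds l) := rfl

lemma mem_segStarts {i : ℕ} : i ∈ segStarts l ↔ i < l.length ∧ ent l i = 0 := by
  simp [segStarts]

lemma segStarts_append :
    segStarts (u ++ v) = segStarts u ++ (segStarts v).map (u.length + ·) := by
  rw [segStarts, List.length_append, List.range_add, List.filter_append, List.filter_map]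
  congr 1
  · exact List.filter_congr fun i hi => by rw [ent_append_left (List.mem_range.mp hi)]
  · simp only [Function.comp_def, ent_append_right]
    rfl

lemma segStarts_of_length_eq_succ {n : ℕ} (hl : l.length = n + 1) (h0 : ent l 0 = 0) :
    segStarts l = 0 :: ((List.range n).map Nat.succ).filter (fun i => ent l i == 0) := by
  rw [segStarts, hl, List.range_succ_eq_map, List.filter_cons_of_pos (by simp [h0])]

lemma segStarts_eq_zero_cons (hne : l ≠ []) (h0 : ent l 0 = 0) : ∃ t, segStarts l = 0 :: t := by
  obtain ⟨n, hn⟩ := Nat.exists_eq_succ_of_ne_zero (List.length_pos_iff.mpr hne).ne'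
  exact ⟨_, segStarts_of_length_eq_succ hn h0⟩

lemma segStarts_eq_singleton (hne : l ≠ []) (h0 : ent l 0 = 0)
    (h : ∀ i, 0 < i → i < l.length → ent l i ≠ 0) : segStarts l = [0] := by
  obtain ⟨n, hn⟩ := Nat.exists_eq_succ_of_ne_zero (List.length_pos_iff.mpr hne).ne'
  rw [segStarts_of_length_eq_succ hn h0, List.filter_eq_nil_iff.mpr]
  simp only [List.mem_map, List.mem_range, beq_iff_eq]
  rintro _ ⟨i, hi, rfl⟩
  exact h _ (Nat.succ_pos i) (by omega)

lemma segStarts_range {m : ℕ} (hm : 1 ≤ m) : segStarts (List.range m) = [0] :=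
  segStarts_eq_singleton (by simp; omega) (ent_range hm)
    (fun i _ hi => by rw [List.length_range] at hi; rw [ent_range hi]; omega)

lemma length_segStarts (l : List ℕ) : (segStarts l).length = l.count 0 := by
  rw [← card_filter_ent_eq, card_filter_range_eq_length]
  rfl

lemma length_riseTouch (l : List ℕ) (S : Finset ℕ) :
    (riseTouch l S).length = (segStarts l).length := by
  simp [riseTouch]
  omega

lemma le_length_of_mem_segEnds {b : ℕ} (hb : b ∈ segEnds l) : b ≤ l.length := by
  rcases List.mem_append.mp hb with hb | hb
  · exact (mem_segStarts.mp (List.mem_of_mem_drop hb)).1.le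
  · exact (List.mem_singleton.mp hb).le

lemma segEnds_append (hu : segStarts u ≠ []) (hv : ∃ t, segStarts v = 0 :: t) :
    segEnds (u ++ v) = segEnds u ++ (segEnds v).map (u.length + ·) := by
  obtain ⟨a, s, hs⟩ := List.exists_cons_of_ne_nil hu
  obtain ⟨t, ht⟩ := hv
  simp [segEnds, segStarts_append, hs, ht]

lemma partLen_joinDec_left {R R' : Finset ℕ} {a b : ℕ} (hb : b ≤ u.length) :
    partLen (joinDec u R R') a b = partLen R a b := by
  rw [partLen, partLen, joinDec, Finset.filter_union, Finset.filter_map,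
    Finset.filter_false_of_mem (s := R') (fun j _ => by simp; omega), Finset.map_empty,
    Finset.union_empty]

lemma partLen_joinDec_right {R R' : Finset ℕ} (hR : R ⊆ range u.length) (a b : ℕ) :
    partLen (joinDec u R R') (u.length + a) (u.length + b) = partLen R' a b := by
  rw [partLen, partLen, joinDec, Finset.filter_union, Finset.filter_map,
    Finset.filter_false_of_mem (s := R)
      (fun i hi => by have := Finset.mem_range.mp (hR hi); omega),
    Finset.empty_union, Finset.card_map]
  simp only [Function.comp_def, addLeftEmbedding_apply, Nat.add_le_add_iff_left,
    Nat.add_lt_add_iff_left]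
  omega

lemma riseTouch_congr {S S' : Finset ℕ} (h : riseSet l S = riseSet l S') :
    riseTouch l S = riseTouch l S' := by
  rw [riseTouch_eq_zipWith, riseTouch_eq_zipWith, h]

lemma riseTouch_append (hu : ent u 0 = 0) (hv : ent v 0 = 0) (hS : S ⊆ range u.length) :
    riseTouch (u ++ v) (joinDec u S T) = riseTouch u S ++ riseTouch v T := by
  rcases eq_or_ne u [] with rfl | hune
  · obtain rfl : S = ∅ := Finset.subset_empty.mp hS
    have : joinDec [] ∅ T = T := by ext; simp [joinDec]
    rw [List.nil_append, this]
    rfl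
  rcases eq_or_ne v [] with rfl | hvne
  · have : riseSet u (joinDec u S T) = riseSet u S := by
      simpa [riseSet, IsRise, joinDec] using riseSet_append (T := T) (u := u) hv hS
    rw [List.append_nil, riseTouch_congr this]
    simp [riseTouch, segStarts]
  obtain ⟨su, hsu⟩ := segStarts_eq_zero_cons hune hu
  have hlen : (segStarts u).length = (segEnds u).length := by simp [segEnds, hsu]
  rw [riseTouch_eq_zipWith, riseSet_append hv hS, segStarts_append,
    segEnds_append (by simp [hsu]) (segStarts_eq_zero_cons hvne hv),
    List.zipWith_append hlen, List.zipWith_map]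
  congr 1
  · rw [riseTouch_eq_zipWith u S, ← List.map_uncurry_zip_eq_zipWith,
      ← List.map_uncurry_zip_eq_zipWith]
    refine List.map_congr_left fun ⟨a, b⟩ hab => ?_
    exact partLen_joinDec_left (le_length_of_mem_segEnds (List.of_mem_zip hab).2)
  · simp only [partLen_joinDec_right (riseSet_subset_range u S)]
    rfl

end Segments

/-- Decorations of the staircase `List.range m` in which every double rise is decorated; `c`
says whether the top row is decorated as well. -/
def stairDec (m : ℕ) (c : Bool) : Finset ℕ := if c then range m else range (m - 1)

section Staircase

variable {m : ℕ} {c : Bool}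

lemma mem_stairDec {i : ℕ} : i ∈ stairDec m c ↔ i + 1 < m ∨ (c = true ∧ i + 1 = m) := by
  cases c <;> simp [stairDec] <;> omega

lemma stairDec_subset : stairDec m c ⊆ range m := by
  intro i hi
  rw [mem_stairDec] at hi
  exact Finset.mem_range.mpr (by omega)

lemma isRise_range {i : ℕ} : IsRise (List.range m) i ↔ i + 1 < m := by
  simp only [IsRise, List.length_range]
  constructor
  · exact And.left
  · exact fun h => ⟨h, by rw [ent_range h, ent_range (by omega)]⟩

lemma riseSet_stair : riseSet (List.range m) (stairDec m c) = range (m - 1) := by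
  ext i
  simp only [riseSet, Finset.mem_filter, mem_stairDec, isRise_range, Finset.mem_range]
  omega

lemma peakSet_stair (hm : 1 ≤ m) :
    peakSet (List.range m) (stairDec m c) = if c then {m - 1} else ∅ := by
  ext i
  cases c <;> simp [peakSet, IsPeak, isRise_range, mem_stairDec] <;> omega

lemma riseTouch_stair (hm : 1 ≤ m) : riseTouch (List.range m) (stairDec m c) = [1] := by
  simp only [riseTouch_eq_zipWith, segEnds, segStarts_range hm, riseSet_stair, List.length_range,
    List.drop_succ_cons, List.drop_nil, List.nil_append, List.zipWith_cons_cons,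
    List.zipWith_nil_left, partLen, List.cons.injEq, and_true]
  rw [Finset.filter_true_of_mem (fun i hi => by simp at hi; omega), Finset.card_range]
  omega

lemma areaC_stair : areaC (List.range m) (stairDec m c) = 0 := by
  rw [areaC, riseSet_stair, area_eq_sum_ent, List.length_range, Nat.sub_eq_zero_iff_le]
  rcases m with _ | n
  · simp
  rw [Finset.sum_range_succ', ent_range (Nat.succ_pos n), add_zero, Nat.add_sub_cancel]

lemma dinvC_range (m : ℕ) (S : Finset ℕ) : dinvC (List.range m) S = 0 := by
  have : dinvPairs (List.range m) = ∅ := by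
    refine Finset.filter_false_of_mem fun p hp => ?_
    simp only [Finset.mem_product, Finset.mem_range, List.length_range] at hp
    rw [ent_range hp.1, ent_range hp.2]
    omega
  rw [dinvC, dinv, this, Finset.card_empty, Nat.zero_sub]

variable {w : List ℕ} {S : Finset ℕ}

lemma riseSet_eq_range_of_riseTouch (hseg : segStarts w = [0]) (h : riseTouch w S = [1]) :
    riseSet w S = range (w.length - 1) := by
  have hsub := riseSet_subset w S
  simp only [riseTouch_eq_zipWith, segEnds, hseg, List.drop_succ_cons, List.drop_nil,
    List.nil_append, List.zipWith_cons_cons, List.zipWith_nil_left, partLen, List.cons.injEq,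
    and_true] at h
  rw [Finset.filter_true_of_mem (fun i hi => by have := Finset.mem_range.mp (hsub hi); omega)]
    at h
  have := Finset.card_le_card hsub
  exact Finset.eq_of_subset_of_card_le hsub (by simp at this ⊢; omega)

lemma eq_range_of_riseSet (h0 : ent w 0 = 0) (h : riseSet w S = range (w.length - 1)) :
    w = List.range w.length := by
  have hent : ∀ i < w.length, ent w i = i := by
    intro i
    induction i with
    | zero => exact fun _ => h0
    | succ i ih =>
      intro hi
      have hrise : i ∈ riseSet w S := h ▸ Finset.mem_range.mpr (by omega)
      rw [(Finset.mem_filter.mp hrise).2.2, ih (by omega)]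
  refine List.ext_getElem (by simp) fun i hi _ => ?_
  rw [List.getElem_range]
  have := hent i hi
  rwa [ent, List.getD_eq_getElem _ _ hi] at this

lemma eq_stair_of_riseTouch (hseg : segStarts w = [0]) (hS : S ⊆ range w.length)
    (h : riseTouch w S = [1]) :
    w = List.range w.length ∧ S = stairDec w.length (decide (w.length - 1 ∈ S)) := by
  have hrise := riseSet_eq_range_of_riseTouch hseg h
  obtain ⟨hpos, h0⟩ := mem_segStarts.mp (hseg ▸ List.mem_singleton_self 0)
  refine ⟨eq_range_of_riseSet h0 hrise, ?_⟩
  ext i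
  rw [mem_stairDec, decide_eq_true_iff]
  constructor
  · intro hi
    have := Finset.mem_range.mp (hS hi)
    by_cases hlt : i + 1 < w.length
    · exact Or.inl hlt
    · exact Or.inr ⟨by rwa [show w.length - 1 = i by omega], by omega⟩
  · rintro (hlt | ⟨htop, hi⟩)
    · have : i ∈ riseSet w S := hrise ▸ Finset.mem_range.mpr (by omega)
      exact (Finset.mem_filter.mp this).1
    · rwa [show i = w.length - 1 by omega]

end Staircase

section Statistics

variable {u v l : List ℕ} {S T : Finset ℕ}

lemma sum_riseSet_le_area (l : List ℕ) (S : Finset ℕ) :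
    ∑ i ∈ riseSet l S, ent l (i + 1) ≤ area l := by
  have hshift : ∑ i ∈ riseSet l S, ent l (i + 1) =
      ∑ i ∈ (riseSet l S).map (addRightEmbedding 1), ent l i := by
    rw [Finset.sum_map]
    rfl
  rw [area_eq_sum_ent, hshift]
  refine Finset.sum_le_sum_of_subset fun i hi => ?_
  obtain ⟨j, hj, rfl⟩ := Finset.mem_map.mp hi
  exact Finset.mem_range.mpr (Finset.mem_filter.mp hj).2.1

lemma areaC_append (hv : ent v 0 = 0) (hS : S ⊆ range u.length) :
    areaC (u ++ v) (joinDec u S T) = areaC u S + areaC v T := by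
  have hsum : ∑ i ∈ riseSet (u ++ v) (joinDec u S T), ent (u ++ v) (i + 1) =
      ∑ i ∈ riseSet u S, ent u (i + 1) + ∑ j ∈ riseSet v T, ent v (j + 1) := by
    rw [riseSet_append hv hS, sum_joinDec (riseSet_subset_range u S)]
    congr 1
    · exact Finset.sum_congr rfl fun i hi =>
        ent_append_left (Finset.mem_filter.mp hi).2.1
    · simp only [add_assoc, ent_append_right]
  have harea : area (u ++ v) = area u + area v := List.sum_append
  have hu := sum_riseSet_le_area u S
  have hv := sum_riseSet_le_area v T
  rw [areaC, areaC, areaC, hsum, harea]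
  omega

lemma dinv_eq_sum_bval (l : List ℕ) : dinv l = ∑ k ∈ range l.length, bval l k := by
  simp only [dinv, dinvPairs, bval, Finset.card_filter, Finset.sum_product]
  rw [Finset.sum_add_distrib,
    Finset.sum_comm (f := fun k i => if i < k ∧ ent l i = ent l k + 1 then 1 else 0),
    ← Finset.sum_add_distrib]
  refine Finset.sum_congr rfl fun i _ => ?_
  rw [← Finset.sum_add_distrib]
  refine Finset.sum_congr rfl fun j _ => ?_
  split_ifs <;> omega

lemma dinvC_eq_sum (l : List ℕ) (S : Finset ℕ) :
    dinvC l S = ∑ k ∈ range l.length, if k ∈ peakSet l S then 0 else bval l k := by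
  have hsplit : ∑ k ∈ range l.length, bval l k =
      ∑ k ∈ range l.length, (if k ∈ peakSet l S then bval l k else 0) +
        ∑ k ∈ range l.length, (if k ∈ peakSet l S then 0 else bval l k) := by
    rw [← Finset.sum_add_distrib]
    exact Finset.sum_congr rfl fun k _ => by split_ifs <;> simp
  rw [dinvC, dinv_eq_sum_bval, hsplit, Finset.sum_ite_mem,
    Finset.inter_eq_right.mpr (peakSet_subset_range l S)]
  omega

lemma bval_append_left {i : ℕ} (hi : i < u.length) :
    bval (u ++ v) i = bval u i + v.count (ent u i) := by
  have hu : ∀ j ∈ range u.length, ent (u ++ v) j = ent u j :=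
    fun j hj => ent_append_left (Finset.mem_range.mp hj)
  rw [bval, bval, List.length_append, card_filter_range_add, card_filter_range_add,
    ent_append_left hi, Finset.filter_congr (fun j hj => by rw [hu j hj]),
    Finset.filter_congr (p := fun j => j < i ∧ ent (u ++ v) j = ent u i + 1)
      (fun j hj => by rw [hu j hj]), ← card_filter_ent_eq]
  simp only [ent_append_right]
  have hafter : (range v.length).filter (fun j => i < u.length + j ∧ ent v j = ent u i) =
      (range v.length).filter (fun j => ent v j = ent u i) :=
    Finset.filter_congr fun j _ => ⟨And.right, fun h => ⟨by omega, h⟩⟩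
  have hbefore : (range v.length).filter
      (fun j => u.length + j < i ∧ ent v j = ent u i + 1) = ∅ :=
    Finset.filter_false_of_mem fun j _ h => by omega
  rw [hafter, hbefore, Finset.card_empty]
  ring

lemma bval_append_right (j : ℕ) :
    bval (u ++ v) (u.length + j) = bval v j + u.count (ent v j + 1) := by
  have hu : ∀ i ∈ range u.length, ent (u ++ v) i = ent u i :=
    fun i hi => ent_append_left (Finset.mem_range.mp hi)
  rw [bval, bval, List.length_append, card_filter_range_add, card_filter_range_add,
    ent_append_right, Finset.filter_congr (fun i hi => by rw [hu i hi]),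
    Finset.filter_congr (p := fun i => i < u.length + j ∧ ent (u ++ v) i = ent v j + 1)
      (fun i hi => by rw [hu i hi]), ← card_filter_ent_eq]
  simp only [ent_append_right, Nat.add_lt_add_iff_left]
  have hafter : (range u.length).filter (fun i => u.length + j < i ∧ ent u i = ent v j) = ∅ :=
    Finset.filter_false_of_mem fun i hi h => by rw [Finset.mem_range] at hi; omega
  have hbefore : (range u.length).filter
      (fun i => i < u.length + j ∧ ent u i = ent v j + 1) =
      (range u.length).filter (fun i => ent u i = ent v j + 1) :=
    Finset.filter_congr fun i hi =>
      ⟨And.right, fun h => ⟨by rw [Finset.mem_range] at hi; omega, h⟩⟩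
  rw [hafter, hbefore, Finset.card_empty]
  ring

lemma dinvC_append (hv : ent v 0 = 0) (hS : S ⊆ range u.length) :
    dinvC (u ++ v) (joinDec u S T) = dinvC u S + dinvC v T +
      (∑ i ∈ range u.length, if i ∈ peakSet u S then 0 else v.count (ent u i)) +
      ∑ j ∈ range v.length, if j ∈ peakSet v T then 0 else u.count (ent v j + 1) := by
  have hleft : ∀ i ∈ range u.length,
      (if i ∈ peakSet (u ++ v) (joinDec u S T) then 0 else bval (u ++ v) i) =
      (if i ∈ peakSet u S then 0 else bval u i) +
        (if i ∈ peakSet u S then 0 else v.count (ent u i)) := by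
    intro i hi
    simp only [peakSet_append hv hS, mem_joinDec_left (Finset.mem_range.mp hi),
      bval_append_left (Finset.mem_range.mp hi)]
    split_ifs <;> rfl
  have hright : ∀ j ∈ range v.length,
      (if u.length + j ∈ peakSet (u ++ v) (joinDec u S T) then 0
        else bval (u ++ v) (u.length + j)) =
      (if j ∈ peakSet v T then 0 else bval v j) +
        (if j ∈ peakSet v T then 0 else u.count (ent v j + 1)) := by
    intro j _
    simp only [peakSet_append hv hS, mem_joinDec_right (peakSet_subset_range u S),
      bval_append_right]
    split_ifs <;> rfl
  rw [dinvC_eq_sum, dinvC_eq_sum, dinvC_eq_sum, List.length_append, Finset.sum_range_add,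
    Finset.sum_congr rfl hleft, Finset.sum_congr rfl hright, Finset.sum_add_distrib,
    Finset.sum_add_distrib]
  ring

end Statistics

section LastMax

variable {u v l : List ℕ}

lemma lastMaxRow_spec (hne : l ≠ []) :
    lastMaxRow l < l.length ∧ (∀ j < l.length, ent l j ≤ ent l (lastMaxRow l)) ∧
      ∀ j, lastMaxRow l < j → j < l.length → ent l j < ent l (lastMaxRow l) := by
  set M := (range l.length).filter (fun i => ∀ j ∈ range l.length, ent l j ≤ ent l i)
  have hM : M.Nonempty := by
    obtain ⟨i, hi, hmax⟩ := Finset.exists_max_image (range l.length) (ent l)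
      ⟨0, Finset.mem_range.mpr (List.length_pos_iff.mpr hne)⟩
    exact ⟨i, Finset.mem_filter.mpr ⟨hi, hmax⟩⟩
  obtain ⟨k, hk, hsup⟩ := Finset.exists_mem_eq_sup M hM id
  have hlast : lastMaxRow l = k := hsup
  obtain ⟨hkl, hkmax⟩ := Finset.mem_filter.mp hk
  rw [hlast]
  refine ⟨Finset.mem_range.mp hkl, fun j hj => hkmax j (Finset.mem_range.mpr hj), ?_⟩
  intro j hkj hj
  by_contra hge
  have hjM : j ∈ M := Finset.mem_filter.mpr ⟨Finset.mem_range.mpr hj, fun i hi =>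
    (hkmax i hi).trans (not_lt.mp hge)⟩
  have := Finset.le_sup (f := id) hjM
  rw [hsup] at this
  exact absurd this (not_le.mpr hkj)

lemma lastMaxRow_eq {k : ℕ} (hk : k < l.length) (hmax : ∀ j < l.length, ent l j ≤ ent l k)
    (hlast : ∀ j, k < j → j < l.length → ent l j < ent l k) : lastMaxRow l = k := by
  obtain ⟨h₁, h₂, h₃⟩ := lastMaxRow_spec (List.length_pos_iff.mp (Nat.zero_lt_of_lt hk))
  rcases lt_trichotomy (lastMaxRow l) k with hlt | heq | hgt
  · exact absurd (hmax _ h₁) (not_le.mpr (h₃ k hlt hk))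
  · exact heq
  · exact absurd (h₂ k hk) (not_le.mpr (hlast _ hgt h₁))

lemma lastMaxRow_range {m : ℕ} (hm : 1 ≤ m) : lastMaxRow (List.range m) = m - 1 := by
  refine lastMaxRow_eq (by simp; omega) (fun j hj => ?_) (fun j _ hj => ?_) <;>
  · rw [List.length_range] at hj
    rw [ent_range hj, ent_range (by omega)]
    omega

lemma lastMaxRow_append_of_lt (hu : u ≠ []) (h : ∀ j < v.length, ent v j < ent u (lastMaxRow u)) :
    lastMaxRow (u ++ v) = lastMaxRow u := by
  obtain ⟨h₁, h₂, h₃⟩ := lastMaxRow_spec hu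
  refine lastMaxRow_eq (by simp; omega) (fun j hj => ?_) (fun j hj hj' => ?_)
  all_goals
    simp only [List.length_append] at *
    rw [ent_append, ent_append, if_pos h₁]
    split_ifs with hju
  · exact h₂ j hju
  · exact (h _ (by omega)).le
  · exact h₃ j hj hju
  · exact h _ (by omega)

lemma lastMaxRow_append_of_le (hv : v ≠ []) (h : ∀ i < u.length, ent u i ≤ ent v (lastMaxRow v)) :
    lastMaxRow (u ++ v) = u.length + lastMaxRow v := by
  obtain ⟨h₁, h₂, h₃⟩ := lastMaxRow_spec hv
  refine lastMaxRow_eq (by simp; omega) (fun j hj => ?_) (fun j hj hj' => ?_)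
  all_goals
    simp only [List.length_append] at *
    rw [ent_append_right, ent_append]
    split_ifs with hju
  · exact h j hju
  · exact h₂ _ (by omega)
  · omega
  · exact h₃ _ (by omega) (by omega)

end LastMax

def stairFront (k : ℕ) (c : Bool) (r : List ℕ) (T : Finset ℕ) : List ℕ × Finset ℕ :=
  (List.range (k + 1) ++ r, joinDec (List.range (k + 1)) (stairDec (k + 1) c) T)

def stairBack (k : ℕ) (c : Bool) (r : List ℕ) (T : Finset ℕ) : List ℕ × Finset ℕ :=
  (r ++ List.range k, joinDec r T (stairDec k c))

section Rotation

variable {k : ℕ} {c : Bool} {r : List ℕ} {T : Finset ℕ}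

lemma stairDec_subset_range_length (m : ℕ) (c : Bool) :
    stairDec m c ⊆ range (List.range m).length := by
  rw [List.length_range]
  exact stairDec_subset

lemma riseTouch_stairFront (hr : ent r 0 = 0) :
    riseTouch (stairFront k c r T).1 (stairFront k c r T).2 = 1 :: riseTouch r T := by
  rw [stairFront, riseTouch_append (ent_range k.succ_pos) hr (stairDec_subset_range_length _ _),
    riseTouch_stair (by omega)]
  rfl

lemma riseTouch_stairBack (hk : 1 ≤ k) (hr : ent r 0 = 0) (hT : T ⊆ range r.length) :
    riseTouch (stairBack k c r T).1 (stairBack k c r T).2 = riseTouch r T ++ [1] := by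
  rw [stairBack, riseTouch_append hr (ent_range hk) hT, riseTouch_stair hk]

lemma card_riseSet_stairFront (hr : ent r 0 = 0) :
    (riseSet (stairFront k c r T).1 (stairFront k c r T).2).card = k + (riseSet r T).card := by
  rw [stairFront, riseSet_append hr (stairDec_subset_range_length _ _),
    card_joinDec (riseSet_subset_range _ _), riseSet_stair, Finset.card_range, Nat.add_sub_cancel]

lemma card_riseSet_stairBack (hT : T ⊆ range r.length) :
    (riseSet (stairBack k c r T).1 (stairBack k c r T).2).card = (riseSet r T).card + (k - 1) := by
  rw [stairBack, riseSet_append (isDyckOrNil_range k).1 hT, card_joinDec (riseSet_subset_range _ _),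
    riseSet_stair, Finset.card_range]

lemma card_peakSet_stairFront (hk : 1 ≤ k) (hr : ent r 0 = 0) (hT : T ⊆ range r.length) :
    (peakSet (stairFront k c r T).1 (stairFront k c r T).2).card =
      (peakSet (stairBack k c r T).1 (stairBack k c r T).2).card := by
  rw [stairFront, stairBack, peakSet_append hr (stairDec_subset_range_length _ _),
    peakSet_append (isDyckOrNil_range k).1 hT, card_joinDec (peakSet_subset_range _ _),
    card_joinDec (peakSet_subset_range _ _), peakSet_stair (by omega), peakSet_stair hk]
  cases c <;> simp [add_comm]

lemma areaC_stairFront (hr : ent r 0 = 0) (hT : T ⊆ range r.length) :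
    areaC (stairFront k c r T).1 (stairFront k c r T).2 =
      areaC (stairBack k c r T).1 (stairBack k c r T).2 := by
  rw [stairFront, stairBack, areaC_append hr (stairDec_subset_range_length _ _),
    areaC_append (isDyckOrNil_range k).1 hT, areaC_stair, areaC_stair, zero_add, add_zero]

lemma dinvC_stairFront (hk : 1 ≤ k) (hr : ent r 0 = 0) (hT : T ⊆ range r.length) :
    dinvC (stairFront k c r T).1 (stairFront k c r T).2 =
      dinvC (stairBack k c r T).1 (stairBack k c r T).2 + (riseTouch r T).length := by
  rw [stairFront, stairBack, dinvC_append hr (stairDec_subset_range_length _ _),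
    dinvC_append (isDyckOrNil_range k).1 hT, dinvC_range, dinvC_range, peakSet_stair (by omega),
    peakSet_stair hk, length_riseTouch, length_segStarts, List.length_range, List.length_range,
    Finset.sum_range_succ']
  have hcount : ∀ j ∈ range r.length,
      (if j ∈ peakSet r T then 0 else (List.range (k + 1)).count (ent r j + 1)) =
      (if j ∈ peakSet r T then 0 else (List.range k).count (ent r j)) := by
    intro j _
    simp only [List.count_range, Nat.add_lt_add_iff_right]
  have htop : ∀ i ∈ range k,
      (if i + 1 ∈ (if c then {k + 1 - 1} else ∅ : Finset ℕ) then 0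
        else r.count (ent (List.range (k + 1)) (i + 1))) =
      (if i ∈ (if c then {k - 1} else ∅ : Finset ℕ) then 0
        else r.count (ent (List.range k) i + 1)) := by
    intro i hi
    rw [Finset.mem_range] at hi
    rw [ent_range (by omega), ent_range hi]
    cases c <;> simp [show i + 1 = k ↔ i = k - 1 by omega]
  rw [Finset.sum_congr rfl hcount, Finset.sum_congr rfl htop, ent_range k.succ_pos]
  have hk0 : (0 : ℕ) ≠ k := by omega
  cases c <;> simp [hk0] <;> omega

lemma lastMaxRow_mem_stairFront_iff (hk : 1 ≤ k) (hT : T ⊆ range r.length) :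
    lastMaxRow (stairFront k c r T).1 ∈ (stairFront k c r T).2 ↔
      lastMaxRow (stairBack k c r T).1 ∈ (stairBack k c r T).2 := by
  simp only [stairFront, stairBack]
  by_cases hhigh : ∃ j < r.length, k ≤ ent r j
  · obtain ⟨j, hj, hkj⟩ := hhigh
    have hne : r ≠ [] := List.ne_nil_of_length_pos (by omega)
    obtain ⟨hlast, hmax, -⟩ := lastMaxRow_spec hne
    have := hmax j hj
    rw [lastMaxRow_append_of_le hne (fun i hi => by
        rw [List.length_range] at hi; rw [ent_range hi]; omega),
      lastMaxRow_append_of_lt hne (fun i hi => by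
        rw [List.length_range] at hi; rw [ent_range hi]; omega),
      mem_joinDec_right (stairDec_subset_range_length _ _), mem_joinDec_left hlast]
  · push Not at hhigh
    rw [lastMaxRow_append_of_lt (by simp) (fun i hi => by
        rw [lastMaxRow_range (by omega), ent_range (by omega)]; exact hhigh i hi),
      lastMaxRow_append_of_le (by simp; omega) (fun i hi => by
        rw [lastMaxRow_range hk, ent_range (by omega)]; have := hhigh i hi; omega),
      lastMaxRow_range (by omega), lastMaxRow_range hk,
      mem_joinDec_left (by simp), mem_joinDec_right hT, mem_stairDec, mem_stairDec]
    cases c <;> simp <;> omega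

lemma mem_decPaths_stairFront_iff (hk : 1 ≤ k) (hr : IsDyckOrNil r) (hT : T ⊆ range r.length)
    {n : ℕ} : stairFront k c r T ∈ decPaths n ↔ stairBack k c r T ∈ decPaths (n - 1) := by
  have hfront : IsDyck (stairFront k c r T).1 :=
    ((isDyckOrNil_range _).append hr).isDyck (by simp)
  have hback : IsDyck (stairBack k c r T).1 :=
    (hr.append (isDyckOrNil_range _)).isDyck (by simp; omega)
  have hsubF : (stairFront k c r T).2 ⊆ range (stairFront k c r T).1.length :=
    joinDec_subset_range (stairDec_subset_range_length _ _) hT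
  have hsubB : (stairBack k c r T).2 ⊆ range (stairBack k c r T).1.length :=
    joinDec_subset_range hT (stairDec_subset_range_length _ _)
  rw [mem_decPaths, mem_decPaths, lastMaxRow_mem_stairFront_iff hk hT]
  simp only [hfront, hback, hsubF, hsubB, true_and, and_congr_right_iff]
  intro _
  simp only [stairFront, stairBack, List.length_append, List.length_range]
  omega

end Rotation

def dropDec (t : ℕ) (S : Finset ℕ) : Finset ℕ := (S.filter (t ≤ ·)).image (· - t)

section Split

variable {l : List ℕ} {S : Finset ℕ} {t : ℕ}

lemma mem_dropDec {j : ℕ} : j ∈ dropDec t S ↔ t + j ∈ S := by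
  simp only [dropDec, Finset.mem_image, Finset.mem_filter]
  constructor
  · rintro ⟨i, ⟨hi, hti⟩, rfl⟩
    rwa [Nat.add_sub_cancel' hti]
  · exact fun h => ⟨t + j, ⟨h, Nat.le_add_right t j⟩, by omega⟩

lemma dropDec_subset (hS : S ⊆ range l.length) : dropDec t S ⊆ range (l.drop t).length := by
  intro j hj
  have := Finset.mem_range.mp (hS (mem_dropDec.mp hj))
  simp only [List.length_drop, Finset.mem_range]
  omega

lemma filter_lt_subset (ht : t ≤ l.length) : S.filter (· < t) ⊆ range (l.take t).length := by
  intro i hi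
  simp only [List.length_take, Finset.mem_range, Finset.mem_filter] at hi ⊢
  omega

lemma joinDec_take_dropDec (ht : t ≤ l.length) :
    joinDec (l.take t) (S.filter (· < t)) (dropDec t S) = S := by
  have hlen : (l.take t).length = t := List.length_take_of_le ht
  ext i
  rcases Nat.lt_or_ge i t with hi | hi
  · rw [mem_joinDec_left (by omega), Finset.mem_filter]
    exact and_iff_left hi
  · obtain ⟨j, rfl⟩ : ∃ j, i = t + j := ⟨i - t, by omega⟩
    have := mem_joinDec_right (T := dropDec t S) (filter_lt_subset (S := S) ht) (j := j)
    rw [hlen] at this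
    rw [this, mem_dropDec]

lemma riseTouch_eq_take_append_drop (hl : ent l 0 = 0) (ht : t ≤ l.length) (ht0 : ent l t = 0) :
    riseTouch l S =
      riseTouch (l.take t) (S.filter (· < t)) ++ riseTouch (l.drop t) (dropDec t S) := by
  have htake : ent (l.take t) 0 = 0 := by
    rcases Nat.eq_zero_or_pos t with rfl | htpos
    · rfl
    · rwa [ent_take htpos]
  have := riseTouch_append (u := l.take t) (v := l.drop t) (S := S.filter (· < t))
    (T := dropDec t S) htake (by rwa [ent_drop, add_zero]) (filter_lt_subset ht)
  rwa [List.take_append_drop, joinDec_take_dropDec ht] at this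

end Split

lemma exists_pos_ent_eq_zero (l : List ℕ) : ∃ i, 0 < i ∧ ent l i = 0 :=
  ⟨l.length + 1, Nat.succ_pos _, ent_of_length_le (Nat.le_succ _)⟩

/-- The first row after row `0` on the diagonal; entries past the end read as `0`, so this is
`l.length` when the path does not return to the diagonal. -/
def firstReturn (l : List ℕ) : ℕ := Nat.find (exists_pos_ent_eq_zero l)

def lastTouch (l : List ℕ) : ℕ := Nat.findGreatest (fun i => ent l i = 0) (l.length - 1)

section Touch

variable {l : List ℕ}

lemma firstReturn_pos : 0 < firstReturn l := (Nat.find_spec (exists_pos_ent_eq_zero l)).1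

lemma ent_firstReturn : ent l (firstReturn l) = 0 := (Nat.find_spec (exists_pos_ent_eq_zero l)).2

lemma ent_ne_zero_of_lt_firstReturn {i : ℕ} (hi : 0 < i) (h : i < firstReturn l) :
    ent l i ≠ 0 :=
  fun h0 => Nat.find_min (exists_pos_ent_eq_zero l) h ⟨hi, h0⟩

lemma firstReturn_le_length (hne : l ≠ []) : firstReturn l ≤ l.length :=
  Nat.find_min' _ ⟨List.length_pos_iff.mpr hne, ent_of_length_le le_rfl⟩

lemma ent_lastTouch (h0 : ent l 0 = 0) : ent l (lastTouch l) = 0 :=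
  Nat.findGreatest_spec (P := fun i => ent l i = 0) (Nat.zero_le _) h0

lemma lastTouch_lt_length (hne : l ≠ []) : lastTouch l < l.length :=
  (Nat.findGreatest_le _).trans_lt (Nat.sub_lt (List.length_pos_iff.mpr hne) Nat.one_pos)

lemma ent_ne_zero_of_lastTouch_lt {i : ℕ} (h : lastTouch l < i) (hi : i < l.length) :
    ent l i ≠ 0 :=
  Nat.findGreatest_is_greatest (P := fun i => ent l i = 0) h (by omega)

end Touch

section Structure

variable {n : ℕ} {β : List ℕ}

lemma exists_eq_stairFront {p : List ℕ × Finset ℕ} (hp : p ∈ decPaths n)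
    (hrt : riseTouch p.1 p.2 = 1 :: β) (hrise : IsRise p.1 0) :
    ∃ k c r T, 1 ≤ k ∧ IsDyckOrNil r ∧ T ⊆ range r.length ∧ p = stairFront k c r T := by
  obtain ⟨l, S⟩ := p
  obtain ⟨hD, hS, -, -⟩ := mem_decPaths.mp hp
  dsimp only at hD hS hrt hrise
  set m := firstReturn l
  have hm : m ≤ l.length := firstReturn_le_length hD.1
  have hlen : (l.take m).length = m := List.length_take_of_le hm
  have hseg : segStarts (l.take m) = [0] :=
    segStarts_eq_singleton (List.ne_nil_of_length_pos (by rw [hlen]; exact firstReturn_pos))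
      (by rw [ent_take firstReturn_pos]; exact hD.2.1)
      (fun i hi0 hi => by
        rw [ent_take (by omega)]; exact ent_ne_zero_of_lt_firstReturn hi0 (by omega))
  have hfirst : riseTouch (l.take m) (S.filter (· < m)) = [1] := by
    have hone : (riseTouch (l.take m) (S.filter (· < m))).length = 1 := by
      rw [length_riseTouch, hseg]; rfl
    obtain ⟨x, hx⟩ := List.length_eq_one_iff.mp hone
    rw [riseTouch_eq_take_append_drop hD.2.1 hm ent_firstReturn, hx] at hrt
    rw [hx, (List.cons.inj hrt).1]
  obtain ⟨htake, hdec⟩ := eq_stair_of_riseTouch hseg (filter_lt_subset hm) hfirst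
  generalize decide ((l.take m).length - 1 ∈ S.filter (· < m)) = c at hdec
  have hm2 : 2 ≤ m := by
    have h1 : ent l 1 = 1 := by simpa [hD.2.1] using hrise.2
    have hne : m ≠ 1 := fun h => by
      have h0 : ent l m = 0 := ent_firstReturn
      rw [h, h1] at h0
      exact one_ne_zero h0
    have := firstReturn_pos (l := l)
    omega
  obtain ⟨k, hk⟩ : ∃ k, m = k + 1 := ⟨m - 1, by omega⟩
  refine ⟨k, c, l.drop m, dropDec m S, by omega, hD.isDyckOrNil.drop ent_firstReturn,
    dropDec_subset hS, ?_⟩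
  rw [hlen, hk] at htake hdec
  rw [stairFront, ← htake, ← hdec, ← hk, List.take_append_drop, joinDec_take_dropDec hm]

lemma exists_eq_stairBack {q : List ℕ × Finset ℕ} (hq : q ∈ decPaths n)
    (hrt : riseTouch q.1 q.2 = β ++ [1]) :
    ∃ k c r T, 1 ≤ k ∧ IsDyckOrNil r ∧ T ⊆ range r.length ∧ q = stairBack k c r T := by
  obtain ⟨l, S⟩ := q
  obtain ⟨hD, hS, -, -⟩ := mem_decPaths.mp hq
  dsimp only at hD hS hrt
  set u := lastTouch l
  have hu : u < l.length := lastTouch_lt_length hD.1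
  have hu0 : ent l u = 0 := ent_lastTouch hD.2.1
  have hlen : (l.drop u).length = l.length - u := List.length_drop
  have hseg : segStarts (l.drop u) = [0] :=
    segStarts_eq_singleton (List.ne_nil_of_length_pos (by omega)) (by rwa [ent_drop, add_zero])
      (fun i hi0 hi => by
        rw [ent_drop]; exact ent_ne_zero_of_lastTouch_lt (by omega) (by omega))
  have hlast : riseTouch (l.drop u) (dropDec u S) = [1] := by
    have hone : (riseTouch (l.drop u) (dropDec u S)).length = 1 := by
      rw [length_riseTouch, hseg]; rfl
    obtain ⟨x, hx⟩ := List.length_eq_one_iff.mp hone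
    rw [riseTouch_eq_take_append_drop hD.2.1 hu.le hu0, hx] at hrt
    rw [hx, (List.append_inj' hrt rfl).2]
  obtain ⟨hdrop, hdec⟩ := eq_stair_of_riseTouch hseg (dropDec_subset hS) hlast
  generalize decide ((l.drop u).length - 1 ∈ dropDec u S) = c at hdec
  refine ⟨l.length - u, c, l.take u, S.filter (· < u), by omega, hD.isDyckOrNil.take u,
    filter_lt_subset hu.le, ?_⟩
  rw [hlen] at hdrop hdec
  rw [stairBack, ← hdrop, ← hdec, List.take_append_drop, joinDec_take_dropDec hu.le]

end Structure

def rotate (p : List ℕ × Finset ℕ) : List ℕ × Finset ℕ :=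
  stairBack (firstReturn p.1 - 1) (decide (firstReturn p.1 - 1 ∈ p.2))
    (p.1.drop (firstReturn p.1)) (dropDec (firstReturn p.1) p.2)

def unrotate (q : List ℕ × Finset ℕ) : List ℕ × Finset ℕ :=
  stairFront (q.1.length - lastTouch q.1) (decide (q.1.length - 1 ∈ q.2))
    (q.1.take (lastTouch q.1)) (q.2.filter (· < lastTouch q.1))

section Rotate

variable {k : ℕ} {c : Bool} {r : List ℕ} {T : Finset ℕ}

lemma firstReturn_stairFront (hr : ent r 0 = 0) : firstReturn (stairFront k c r T).1 = k + 1 := by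
  refine (Nat.find_eq_iff _).mpr ⟨⟨k.succ_pos, by simp [stairFront, ent_append, hr]⟩, ?_⟩
  rintro i hi ⟨hi0, h0⟩
  rw [stairFront, ent_append_left (by simpa using hi), ent_range hi] at h0
  omega

lemma lastTouch_stairBack (hk : 1 ≤ k) : lastTouch (stairBack k c r T).1 = r.length := by
  refine Nat.findGreatest_eq_iff.mpr ⟨by simp [stairBack]; omega, fun _ => ?_, ?_⟩
  · rw [stairBack, ← add_zero r.length, ent_append_right]
    exact (isDyckOrNil_range k).1
  · intro i hri hi h0
    simp only [stairBack, List.length_append, List.length_range] at hi h0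
    rw [ent_append, if_neg (by omega), ent_range (by omega)] at h0
    omega

lemma rotate_stairFront (hr : ent r 0 = 0) : rotate (stairFront k c r T) = stairBack k c r T := by
  have hk : decide (k ∈ (stairFront k c r T).2) = c := by
    rw [Bool.eq_iff_iff, decide_eq_true_iff, stairFront, mem_joinDec_left (by simp), mem_stairDec]
    cases c <;> simp
  have hT : dropDec (k + 1) (stairFront k c r T).2 = T := by
    ext j
    have := mem_joinDec_right (u := List.range (k + 1)) (S := stairDec (k + 1) c) (T := T)
      (stairDec_subset_range_length _ _) (j := j)
    rw [List.length_range] at this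
    rw [mem_dropDec, stairFront, this]
  simp only [rotate, firstReturn_stairFront hr, Nat.add_sub_cancel, hk, hT]
  simp [stairFront]

lemma unrotate_stairBack (hk : 1 ≤ k) (hT : T ⊆ range r.length) :
    unrotate (stairBack k c r T) = stairFront k c r T := by
  have hlen : (stairBack k c r T).1.length = r.length + k := by simp [stairBack]
  have htop : decide (r.length + k - 1 ∈ (stairBack k c r T).2) = c := by
    rw [Bool.eq_iff_iff, decide_eq_true_iff, show r.length + k - 1 = r.length + (k - 1) by omega,
      stairBack, mem_joinDec_right hT, mem_stairDec]
    cases c <;> simp <;> omega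
  have hT' : (stairBack k c r T).2.filter (· < r.length) = T := by
    ext i
    rw [Finset.mem_filter]
    constructor
    · rintro ⟨hi, hir⟩
      rwa [stairBack, mem_joinDec_left hir] at hi
    · intro hi
      have hir := Finset.mem_range.mp (hT hi)
      rw [stairBack, mem_joinDec_left hir]
      exact ⟨hi, hir⟩
  simp only [unrotate, lastTouch_stairBack hk, hlen, Nat.add_sub_cancel_left, htop, hT']
  simp [stairBack]

end Rotate

/-- The decorated paths of the set `A` of the theorem. -/
def IsRotSource (n : ℕ) (β : List ℕ) (k ℓ : ℕ) (p : List ℕ × Finset ℕ) : Prop :=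
  p ∈ decPaths n ∧ riseTouch p.1 p.2 = 1 :: β ∧ (peakSet p.1 p.2).card = k ∧
    (riseSet p.1 p.2).card = ℓ ∧ IsRise p.1 0 ∧ 0 ∈ p.2

/-- The decorated paths of the set `B` of the theorem. -/
def IsRotTarget (n : ℕ) (β : List ℕ) (k ℓ : ℕ) (q : List ℕ × Finset ℕ) : Prop :=
  q ∈ decPaths (n - 1) ∧ riseTouch q.1 q.2 = β ++ [1] ∧ (peakSet q.1 q.2).card = k ∧
    (riseSet q.1 q.2).card = ℓ - 1

section Bijection

variable {n : ℕ} {β : List ℕ} {k ℓ : ℕ}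

lemma isRise_stairFront_zero {j : ℕ} {c : Bool} {r : List ℕ} {T : Finset ℕ} (hj : 1 ≤ j)
    (hr : ent r 0 = 0) : IsRise (stairFront j c r T).1 0 := by
  rw [stairFront, isRise_append_left hr (by simp), isRise_range]
  omega

lemma zero_mem_stairFront {j : ℕ} {c : Bool} {r : List ℕ} {T : Finset ℕ} (hj : 1 ≤ j) :
    0 ∈ (stairFront j c r T).2 := by
  rw [stairFront, mem_joinDec_left (by simp), mem_stairDec]
  omega

lemma rotate_spec {p : List ℕ × Finset ℕ} (hp : IsRotSource n β k ℓ p) :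
    IsRotTarget n β k ℓ (rotate p) ∧
      dinvC p.1 p.2 = dinvC (rotate p).1 (rotate p).2 + β.length ∧
      areaC p.1 p.2 = areaC (rotate p).1 (rotate p).2 ∧ unrotate (rotate p) = p := by
  obtain ⟨hmem, hrt, hpk, hrs, hrise, -⟩ := hp
  obtain ⟨j, c, r, T, hj, hr, hT, rfl⟩ := exists_eq_stairFront hmem hrt hrise
  rw [riseTouch_stairFront hr.1, List.cons.injEq] at hrt
  rw [card_riseSet_stairFront hr.1] at hrs
  rw [rotate_stairFront hr.1, unrotate_stairBack hj hT]
  refine ⟨⟨(mem_decPaths_stairFront_iff hj hr hT).mp hmem, ?_, ?_, ?_⟩, ?_,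
    areaC_stairFront hr.1 hT, rfl⟩
  · rw [riseTouch_stairBack hj hr.1 hT, hrt.2]
  · rw [← card_peakSet_stairFront hj hr.1 hT, hpk]
  · rw [card_riseSet_stairBack hT]
    omega
  · rw [dinvC_stairFront hj hr.1 hT, hrt.2]

lemma unrotate_spec (hℓ : 1 ≤ ℓ) {q : List ℕ × Finset ℕ} (hq : IsRotTarget n β k ℓ q) :
    IsRotSource n β k ℓ (unrotate q) ∧ rotate (unrotate q) = q := by
  obtain ⟨hmem, hrt, hpk, hrs⟩ := hq
  obtain ⟨j, c, r, T, hj, hr, hT, rfl⟩ := exists_eq_stairBack hmem hrt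
  rw [riseTouch_stairBack hj hr.1 hT, List.append_left_inj] at hrt
  rw [card_riseSet_stairBack hT] at hrs
  rw [unrotate_stairBack hj hT, rotate_stairFront hr.1]
  refine ⟨⟨(mem_decPaths_stairFront_iff hj hr hT).mpr hmem, ?_, ?_, ?_,
    isRise_stairFront_zero hj hr.1, zero_mem_stairFront hj⟩, rfl⟩
  · rw [riseTouch_stairFront hr.1, hrt]
  · rw [card_peakSet_stairFront hj hr.1 hT, hpk]
  · rw [card_riseSet_stairFront hr.1]
    omega

end Bijection

end DeltaCat

open DeltaCat

theorem rotation_bijection_decorated_first_rise_general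
    (k ℓ n : ℕ) (hℓ : 1 ≤ ℓ) (β : List ℕ) :
    ∃ Φ : {p : List ℕ × Finset ℕ // p ∈ decPaths n ∧
            riseTouch p.1 p.2 = 1 :: β ∧ (peakSet p.1 p.2).card = k ∧
            (riseSet p.1 p.2).card = ℓ ∧ IsRise p.1 0 ∧ 0 ∈ p.2} →
          {p : List ℕ × Finset ℕ // p ∈ decPaths (n - 1) ∧
            riseTouch p.1 p.2 = β ++ [1] ∧ (peakSet p.1 p.2).card = k ∧
            (riseSet p.1 p.2).card = ℓ - 1},
      Function.Bijective Φ ∧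
        ∀ p, dinvC p.1.1 p.1.2 = dinvC (Φ p).1.1 (Φ p).1.2 + β.length ∧
             areaC p.1.1 p.1.2 = areaC (Φ p).1.1 (Φ p).1.2 := by
  refine ⟨fun p => ⟨rotate p.1, (rotate_spec p.2).1⟩,
    Function.bijective_iff_has_inverse.mpr
      ⟨fun q => ⟨unrotate q.1, (unrotate_spec hℓ q.2).1⟩,
        fun p => Subtype.ext (rotate_spec p.2).2.2.2,
        fun q => Subtype.ext (unrotate_spec hℓ q.2).2⟩,
    fun p => ⟨(rotate_spec p.2).2.1, (rotate_spec p.2).2.2.1⟩⟩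

/-- Case 3 of Proposition 3.2: cyclic rotation is a bijection between ∘-decorated Dyck
paths of size `n = 1 + |β| + ℓ` with rise-touch composition `(1, β)`, `k` decorated
peaks, `ℓ` decorated double rises whose first row is a decorated double rise, and
∘-decorated Dyck paths of size `n - 1` with rise-touch composition `(β, 1)`, `k`
decorated peaks and `ℓ - 1` decorated double rises; it shifts `dinv_∘` by `ℓ(β)` and
preserves `area_∘`. -/
theorem rotation_bijection_decorated_first_rise
    (k ℓ n : ℕ) (hℓ : 1 ≤ ℓ) (β : List ℕ) (hβ : ∀ x ∈ β, 0 < x)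
    (hn : n = 1 + β.sum + ℓ) :
    ∃ Φ : {p : List ℕ × Finset ℕ // p ∈ decPaths n ∧
            riseTouch p.1 p.2 = 1 :: β ∧ (peakSet p.1 p.2).card = k ∧
            (riseSet p.1 p.2).card = ℓ ∧ IsRise p.1 0 ∧ 0 ∈ p.2} →
          {p : List ℕ × Finset ℕ // p ∈ decPaths (n - 1) ∧
            riseTouch p.1 p.2 = β ++ [1] ∧ (peakSet p.1 p.2).card = k ∧
            (riseSet p.1 p.2).card = ℓ - 1},
      Function.Bijective Φ ∧
        ∀ p, dinvC p.1.1 p.1.2 = dinvC (Φ p).1.1 (Φ p).1.2 + β.length ∧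
             areaC p.1.1 p.1.2 = areaC (Φ p).1.1 (Φ p).1.2 :=
  rotation_bijection_decorated_first_rise_general k ℓ n hℓ β
end
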